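/- arXiv:2604.11366 — 7 statements merged into one kernel-verified Lean document; each statement's English description precedes it below -/
import Mathlib

section
/- For every integer t ≥ 1 and every ε > 0 there exists N such that for all n ≥ N, every graph G on n vertices that contains no subgraph isomorphic to B_t satisfies e(G) ≤ (√t/2 + ε)·n^{3/2}. (That is, ex(n, B_t) ≤ (√t/2)(1+o(1))·n^{3/2}.) -/
open SimpleGraph

/-- `F` is contained in `G` as a subgraph: there is an injective map preserving adjacency. -/
def ContainsCopy {α β : Type*} (F : SimpleGraph α) (G : SimpleGraph β) : Prop :=
  ∃ f : α → β, Function.Injective f ∧ ∀ ⦃a b : α⦄, F.Adj a b → G.Adj (f a) (f b)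

/-- `Bgraph t = K₂ □ S_t`, the Cartesian product of an edge and a star with `t` edges. -/
def Bgraph (t : ℕ) : SimpleGraph (Fin 2 × (Fin 1 ⊕ Fin t)) :=
  (⊤ : SimpleGraph (Fin 2)).boxProd (completeBipartiteGraph (Fin 1) (Fin t))

/-!
A copy of `B_t` is an edge `xw` (the spine) with `t` vertex-disjoint paths `x a y w` (the pages).
For an edge `xw` of a `B_t`-free graph, only boundedly many neighbours `y` of `w` have more than
`t` common neighbours with `x`: otherwise pages can be added greedily, because when no fresh page
exists, every remaining such `y` has `t + 1` neighbours among the at most `2t` used vertices, and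
pigeonholing over subsets of the used vertices produces `K_{t+1,t+1} ⊇ B_t`.
Splitting `∑_y codeg(x, y)` at codegree `t` therefore gives `∑_y codeg(x, y) ≤ t n + O_t(deg x)`,
so `∑_v deg(v)² = ∑_{x,y} codeg(x, y) ≤ t n² + O_t(e)`, and Cauchy–Schwarz yields
`4 e² ≤ t n³ + O_t(e n)`, i.e. `e ≤ (√t / 2) n^{3/2} + O_t(n)`.
-/

open Finset

variable {V : Type*}

/-- The spine is `s 0 s 1`; page `j` is the path `s 0, p (j, 0), p (j, 1), s 1`. -/
def IsBook (G : SimpleGraph V) {k : ℕ} (s : Fin 2 → V) (p : Fin k × Fin 2 → V) : Prop :=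
  Function.Injective (Sum.elim s p) ∧ G.Adj (s 0) (s 1) ∧
    ∀ j, G.Adj (p (j, 0)) (p (j, 1)) ∧ ∀ i, G.Adj (s i) (p (j, i))

def SimpleGraph.codegree [Fintype V] [DecidableEq V] (G : SimpleGraph V) [DecidableRel G.Adj]
    (x y : V) : ℕ :=
  #(G.neighborFinset x ∩ G.neighborFinset y)

variable {G : SimpleGraph V} {t k : ℕ}

theorem IsBook.containsCopy {s : Fin 2 → V} {p : Fin t × Fin 2 → V} (h : IsBook G s p) :
    ContainsCopy (Bgraph t) G := by
  obtain ⟨hinj, hspine, hpage⟩ := h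
  let e : Fin 2 × (Fin 1 ⊕ Fin t) → Fin 2 ⊕ Fin t × Fin 2 := fun q =>
    q.2.elim (fun _ => .inl q.1) (fun j => .inr (j, q.1))
  have he : Function.Injective e := by
    rintro ⟨i, z | j⟩ ⟨i', z' | j'⟩ h <;> simp_all [e, Fin.fin_one_eq_zero]
  refine ⟨Sum.elim s p ∘ e, hinj.comp he, ?_⟩
  rintro ⟨i, z⟩ ⟨i', z'⟩ hadj
  rcases boxProd_adj.mp hadj with ⟨hii', rfl⟩ | ⟨hzz', rfl⟩
  · rcases z with _ | j
    · fin_cases i <;> fin_cases i' <;> simp_all [e, hspine.symm]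
    · fin_cases i <;> fin_cases i' <;> simp_all [e, (hpage j).1.symm]
  · rcases z with _ | j <;> rcases z' with _ | j' <;>
      simp_all [e, (hpage _).2, ((hpage _).2 _).symm]

theorem isBook_zero {s : Fin 2 → V} (h : G.Adj (s 0) (s 1)) :
    IsBook G s (fun q : Fin 0 × Fin 2 => q.1.elim0) := by
  refine ⟨Function.Injective.sumElim ?_ (fun q => q.1.elim0) (fun _ q => q.1.elim0), h,
    fun j => j.elim0⟩
  have := h.ne
  intro i i' hii'
  fin_cases i <;> fin_cases i' <;> simp_all [eq_comm]

theorem IsBook.snoc {s : Fin 2 → V} {p : Fin k × Fin 2 → V} (h : IsBook G s p) {a y : V}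
    (ha : a ∉ Set.range (Sum.elim s p)) (hy : y ∉ Set.range (Sum.elim s p))
    (hsa : G.Adj (s 0) a) (hay : G.Adj a y) (hsy : G.Adj (s 1) y) :
    IsBook G s (fun q : Fin (k + 1) × Fin 2 =>
      Fin.lastCases (![a, y] q.2) (fun j => p (j, q.2)) q.1) := by
  obtain ⟨hinj, hspine, hpage⟩ := h
  have hne := hay.ne
  refine ⟨?_, hspine, fun j => ?_⟩
  · rintro (i | ⟨j, i⟩) (i' | ⟨j', i'⟩) h
    · simpa using @hinj (.inl i) (.inl i') h
    all_goals try cases j using Fin.lastCases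
    all_goals try cases j' using Fin.lastCases
    case inr.inr.cast.cast j j' =>
      simpa using @hinj (.inr (j, i)) (.inr (j', i')) (by simpa using h)
    all_goals fin_cases i <;> fin_cases i' <;> simp_all [eq_comm]
  · cases j using Fin.lastCases with
    | last => exact ⟨by simpa using hay, fun i => by fin_cases i <;> simpa⟩
    | cast j => simpa using hpage j

theorem containsCopy_Bgraph_of_forall_adj {A B : Finset V} (hA : #A = t + 1) (hB : #B = t + 1)
    (hAB : Disjoint A B) (hadj : ∀ a ∈ A, ∀ b ∈ B, G.Adj a b) : ContainsCopy (Bgraph t) G := by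
  let α : Fin (t + 1) → V := fun i => (A.equivFinOfCardEq hA).symm i
  let β : Fin (t + 1) → V := fun i => (B.equivFinOfCardEq hB).symm i
  have hα : Function.Injective α := Subtype.val_injective.comp (Equiv.injective _)
  have hβ : Function.Injective β := Subtype.val_injective.comp (Equiv.injective _)
  have hαβ : ∀ i j, α i ≠ β j := fun i j =>
    disjoint_iff_ne.mp hAB _ (Subtype.prop _) _ (Subtype.prop _)
  have hαβ_adj : ∀ i j, G.Adj (α i) (β j) := fun i j =>
    hadj _ (Subtype.prop _) _ (Subtype.prop _)
  refine IsBook.containsCopy (s := ![α 0, β 0]) (p := fun q => ![β q.1.succ, α q.1.succ] q.2)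
    ⟨?_, hαβ_adj 0 0, fun j => ⟨(hαβ_adj _ _).symm, fun i => ?_⟩⟩
  · rintro (i | ⟨j, i⟩) (i' | ⟨j', i'⟩) h <;> fin_cases i <;> fin_cases i' <;>
      simp_all [hα.eq_iff, hβ.eq_iff, (hαβ _ _).symm, (Fin.succ_ne_zero _).symm]
  · fin_cases i
    · exact hαβ_adj _ _
    · exact (hαβ_adj _ _).symm

theorem exists_forall_adj_of_le_card_filter_adj [DecidableEq V] [DecidableRel G.Adj]
    {U W : Finset V} {r s : ℕ} (hs : 0 < s) (hW : ∀ y ∈ W, r ≤ #{a ∈ U | G.Adj y a})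
    (hcard : 2 ^ #U * s ≤ #W) :
    ∃ A ⊆ U, ∃ B ⊆ W, #A = r ∧ #B = s ∧ ∀ a ∈ A, ∀ b ∈ B, G.Adj a b := by
  obtain ⟨S, hSU, hfiber⟩ := exists_le_card_fiber_of_mul_le_card_of_maps_to
    (f := fun y => {a ∈ U | G.Adj y a}) (fun _ _ => mem_powerset.2 (filter_subset _ _))
    ⟨∅, empty_mem_powerset U⟩ (by rwa [card_powerset])
  obtain ⟨y, hy⟩ := card_pos.1 (hs.trans_le hfiber)
  rw [mem_filter] at hy
  obtain ⟨A, hAS, hA⟩ := exists_subset_card_eq (hy.2 ▸ hW y hy.1)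
  obtain ⟨B, hBfiber, hB⟩ := exists_subset_card_eq hfiber
  refine ⟨A, hAS.trans (mem_powerset.1 hSU), B, hBfiber.trans (filter_subset _ _), hA, hB,
    fun a ha b hb => ?_⟩
  have hb := (mem_filter.1 (hBfiber hb)).2
  exact (mem_filter.1 (hb ▸ hAS ha)).2.symm

section Counting

variable [Fintype V] [DecidableEq V] [DecidableRel G.Adj]

theorem card_filter_lt_codegree_adj_le (hG : ¬ ContainsCopy (Bgraph t) G) {x w : V}
    (hxw : G.Adj x w) :
    #{y | t < G.codegree x y ∧ G.Adj y w} ≤ 2 * t + 2 ^ (2 * t) * (t + 1) := by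
  by_contra! hY
  set Y : Finset V := {y | t < G.codegree x y ∧ G.Adj y w}
  suffices ∀ ℓ ≤ t, ∃ p : Fin ℓ × Fin 2 → V, IsBook G ![x, w] p by
    obtain ⟨p, hp⟩ := this t le_rfl
    exact hG hp.containsCopy
  intro ℓ hℓ
  induction ℓ with
  | zero => exact ⟨_, isBook_zero (by simpa using hxw)⟩
  | succ ℓ ih =>
    obtain ⟨p, hp⟩ := ih (by omega)
    set U : Finset V := univ.image (Sum.elim ![x, w] p)
    by_cases hfresh : ∃ y ∈ Y, y ∉ U ∧ ∃ a, G.Adj x a ∧ G.Adj a y ∧ a ∉ U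
    · obtain ⟨y, hyY, hyU, a, hxa, hay, haU⟩ := hfresh
      have hunused : ∀ {v}, v ∉ U → v ∉ Set.range (Sum.elim ![x, w] p) :=
        fun hv ⟨q, hq⟩ => hv (hq ▸ mem_image_of_mem _ (mem_univ q))
      exact ⟨_, hp.snoc (hunused haU) (hunused hyU) hxa hay (mem_filter.1 hyY).2.2.symm⟩
    push Not at hfresh
    have hU : #U ≤ 2 * t := card_image_le.trans (by simp; omega)
    have hdeg : ∀ y ∈ Y \ U, t + 1 ≤ #{a ∈ U | G.Adj y a} := by
      intro y hy
      obtain ⟨hyY, hyU⟩ := mem_sdiff.1 hy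
      refine (mem_filter.1 hyY).2.1.trans_le (card_le_card fun a ha => ?_)
      simp only [mem_inter, mem_neighborFinset] at ha
      exact mem_filter.2 ⟨hfresh y hyY hyU a ha.1 ha.2.symm, ha.2⟩
    have hcard : 2 ^ #U * (t + 1) ≤ #(Y \ U) :=
      calc 2 ^ #U * (t + 1) ≤ 2 ^ (2 * t) * (t + 1) := by gcongr; norm_num
        _ ≤ #Y - #U := by omega
        _ ≤ #(Y \ U) := le_card_sdiff U Y
    obtain ⟨A, hAU, B, hBY, hA, hB, hAB⟩ :=
      exists_forall_adj_of_le_card_filter_adj (Nat.succ_pos t) hdeg hcard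
    exact (hG (containsCopy_Bgraph_of_forall_adj hA hB
      (disjoint_of_subset_left hAU (disjoint_of_subset_right hBY disjoint_sdiff)) hAB)).elim

theorem sum_codegree_eq_sum_card_filter_adj (x : V) (H : Finset V) :
    ∑ y ∈ H, G.codegree x y = ∑ w ∈ G.neighborFinset x, #{y ∈ H | G.Adj y w} := by
  refine (sum_congr rfl fun y _ => ?_).trans
    (sum_card_bipartiteAbove_eq_sum_card_bipartiteBelow (fun y w => G.Adj y w))
  rw [SimpleGraph.codegree, ← filter_mem_eq_inter]
  simp [bipartiteAbove]

theorem sum_sum_codegree_eq_sum_degree_sq :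
    ∑ x, ∑ y, G.codegree x y = ∑ v, G.degree v ^ 2 := by
  have hdeg : ∀ w, #{y | G.Adj y w} = G.degree w := fun w => by
    rw [← card_neighborFinset_eq_degree, neighborFinset_eq_filter]
    simp only [adj_comm]
  simp_rw [sum_codegree_eq_sum_card_filter_adj, hdeg, neighborFinset_eq_filter]
  refine (sum_sum_bipartiteAbove_eq_sum_sum_bipartiteBelow G.Adj (fun _ w => G.degree w)).trans
    (sum_congr rfl fun w _ => ?_)
  rw [sum_const, smul_eq_mul, sq]
  exact congrArg (· * _) (hdeg w)

theorem sum_codegree_le (hG : ¬ ContainsCopy (Bgraph t) G) (x : V) :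
    ∑ y, G.codegree x y ≤
      t * Fintype.card V + (2 * t + 2 ^ (2 * t) * (t + 1)) * G.degree x := by
  have hsplit : ∀ y, G.codegree x y ≤ t + if t < G.codegree x y then G.codegree x y else 0 := by
    intro y; split_ifs <;> omega
  calc ∑ y, G.codegree x y
      ≤ ∑ y, (t + if t < G.codegree x y then G.codegree x y else 0) :=
        sum_le_sum fun y _ => hsplit y
    _ = t * Fintype.card V + ∑ y ∈ {y | t < G.codegree x y}, G.codegree x y := by
      rw [sum_add_distrib, sum_const, card_univ, smul_eq_mul, sum_filter, mul_comm]
    _ = t * Fintype.card V +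
          ∑ w ∈ G.neighborFinset x, #{y | t < G.codegree x y ∧ G.Adj y w} := by
      rw [sum_codegree_eq_sum_card_filter_adj]
      simp only [filter_filter]
    _ ≤ t * Fintype.card V + ∑ w ∈ G.neighborFinset x, (2 * t + 2 ^ (2 * t) * (t + 1)) := by
      gcongr with w hw
      exact card_filter_lt_codegree_adj_le hG ((mem_neighborFinset G x w).1 hw)
    _ = t * Fintype.card V + (2 * t + 2 ^ (2 * t) * (t + 1)) * G.degree x := by
      rw [sum_const, card_neighborFinset_eq_degree, smul_eq_mul, mul_comm (G.degree x)]

theorem four_mul_sq_card_edgeFinset_le (hG : ¬ ContainsCopy (Bgraph t) G) :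
    4 * #G.edgeFinset ^ 2 ≤ t * Fintype.card V ^ 3 +
      2 * (2 * t + 2 ^ (2 * t) * (t + 1)) * #G.edgeFinset * Fintype.card V := by
  have hsum := G.sum_degrees_eq_twice_card_edges
  calc 4 * #G.edgeFinset ^ 2 = (∑ v, G.degree v) ^ 2 := by rw [hsum]; ring
    _ ≤ Fintype.card V * ∑ v, G.degree v ^ 2 := by
      simpa using sq_sum_le_card_mul_sum_sq (s := univ) (f := fun v => G.degree v)
    _ = Fintype.card V * ∑ x, ∑ y, G.codegree x y := by rw [sum_sum_codegree_eq_sum_degree_sq]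
    _ ≤ Fintype.card V *
          ∑ x, (t * Fintype.card V + (2 * t + 2 ^ (2 * t) * (t + 1)) * G.degree x) := by
      gcongr with x
      exact sum_codegree_le hG x
    _ = _ := by rw [sum_add_distrib, sum_const, ← mul_sum, hsum]; simp; ring

end Counting

theorem le_of_four_mul_sq_le_sq_add_mul {m a b : ℝ} (ha : 0 ≤ a) (hb : 0 ≤ b)
    (h : 4 * m ^ 2 ≤ a ^ 2 + b * m) : m ≤ a / 2 + b / 4 := by
  nlinarith

theorem ex_Bt_upper_general (t : ℕ) (ε : ℝ) (hε : 0 < ε) :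
    ∃ N : ℕ, ∀ n : ℕ, N ≤ n → ∀ G : SimpleGraph (Fin n),
      ¬ ContainsCopy (Bgraph t) G →
      (G.edgeSet.ncard : ℝ) ≤ (Real.sqrt t / 2 + ε) * (n : ℝ) ^ (3/2 : ℝ) := by
  set C : ℕ := 2 * (2 * t + 2 ^ (2 * t) * (t + 1))
  refine ⟨⌈((C : ℝ) / (4 * ε)) ^ 2⌉₊, fun n hn G hG => ?_⟩
  classical
  have hpow_sq : ((n : ℝ) ^ (3/2 : ℝ)) ^ 2 = n ^ 3 := by
    rw [← Real.rpow_mul_natCast (Nat.cast_nonneg n)]; norm_num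
  have hpow : (n : ℝ) ^ (3/2 : ℝ) = n * √n := by
    rw [Real.sqrt_eq_rpow, ← Real.rpow_one_add' (Nat.cast_nonneg n) (by norm_num)]; norm_num
  have hcount : 4 * (#G.edgeFinset : ℝ) ^ 2 ≤
      (√t * n ^ (3/2 : ℝ)) ^ 2 + C * n * #G.edgeFinset := by
    have h := four_mul_sq_card_edgeFinset_le hG
    rw [Fintype.card_fin] at h
    rw [mul_pow, Real.sq_sqrt (Nat.cast_nonneg t), hpow_sq]
    exact_mod_cast h.trans_eq (by ring)
  have hsqrt : C ≤ 4 * ε * √n :=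
    (div_le_iff₀' (by positivity)).1 (Real.le_sqrt_of_sq_le (Nat.ceil_le.1 hn))
  rw [← coe_edgeFinset, Set.ncard_coe_finset]
  calc (#G.edgeFinset : ℝ) ≤ √t * n ^ (3/2 : ℝ) / 2 + C * n / 4 :=
        le_of_four_mul_sq_le_sq_add_mul (by positivity) (by positivity) hcount
    _ ≤ (√t / 2 + ε) * n ^ (3/2 : ℝ) := by
      rw [hpow]
      nlinarith [Nat.cast_nonneg (α := ℝ) n]

theorem ex_Bt_upper (t : ℕ) (ht : 1 ≤ t) (ε : ℝ) (hε : 0 < ε) :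
    ∃ N : ℕ, ∀ n : ℕ, N ≤ n → ∀ G : SimpleGraph (Fin n),
      ¬ ContainsCopy (Bgraph t) G →
      (G.edgeSet.ncard : ℝ) ≤ (Real.sqrt t / 2 + ε) * (n : ℝ) ^ (3/2 : ℝ) :=
  ex_Bt_upper_general t ε hε
end

section
/- Let T be a tree with t vertices (t ≥ 2). For every ε > 0 there exists N such that for all n ≥ N, every bipartite graph G on n vertices that contains no subgraph isomorphic to K_2 □ T satisfies e(G) ≤ (√(t−1)/(2√2) + ε)·n^{3/2}. (That is, ex_bip(n, K_2 □ T) ≤ (√(t−1)/(2√2))(1+o(1))·n^{3/2}.) -/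
open SimpleGraph

/-!
Call `w` a *hub* for `v` (with respect to a relation `R`) if at least `k` neighbours `z` of `w`
satisfy `R v z`, and call `x, y` *rich of depth `s + 1`* if at least `k` of their common neighbours
are hubs for `x`, and at least `k` are hubs for `y`, with respect to richness of depth `s`.

A rich pair of depth `k ≥ |T|` in a bipartite graph yields `K₂ □ T`: the rungs are embedded one
at a time along a breadth-first order of `T`, the rung of a new vertex hanging from the rung of
its parent. The new bottom vertex is a neighbour of the parent's top vertex that forms a rich pair
with the parent's bottom vertex, the new top vertex is a common neighbour of these two that is a
hub for the new bottom vertex, and each step uses up one level of depth; since fewer than `k`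
rungs are ever placed, a fresh vertex is always available.

Without rich pairs of depth `k`, every pair `x, y` stops being rich at some depth `s < k`, so all
but fewer than `k` of its common neighbours fail to be hubs at depth `s`. Counting such non-hub
triples through their middle vertex bounds them by `4k²e(G)`, whence
`∑_{x, y ∈ A} codeg(x, y) ≤ (k - 1)|A|² + 4k²e(G)`. Since this sum is `∑_{w ∈ B} d(w)²`,
Cauchy–Schwarz gives `e(G)² ≤ |B|((k - 1)|A|² + 4k²e(G))`, and with `|A| ≤ |B|` this solves to
`e(G) ≤ √((k - 1)n³/8) + 4k²n`.
-/

lemma le_sqrt_add_of_sq_le_add_mul {x c d : ℝ} (hd : 0 ≤ d) (h : x ^ 2 ≤ c + d * x) :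
    x ≤ √c + d := by
  rcases le_total x d with hxd | hdx
  · linarith [Real.sqrt_nonneg c]
  · have : (x - d) ^ 2 ≤ c := by nlinarith
    linarith [le_abs_self (x - d), Real.abs_le_sqrt this]

lemma eight_mul_sq_mul_le_cube {a b n : ℝ} (ha : 0 ≤ a) (hab : a ≤ b) (hn : a + b ≤ n) :
    8 * (a ^ 2 * b) ≤ n ^ 3 := by
  nlinarith [mul_nonneg (mul_nonneg ha ha) (sub_nonneg.2 hab), sq_nonneg (n - 2 * a),
    mul_nonneg (sub_nonneg.2 hn) (sq_nonneg n), mul_nonneg ha (sub_nonneg.2 hab)]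

lemma rpow_three_halves {n : ℝ} (hn : 0 ≤ n) : n ^ (3 / 2 : ℝ) = n * √n := by
  rw [show (3 / 2 : ℝ) = 1 + 1 / 2 by norm_num, Real.rpow_add' hn (by norm_num), Real.rpow_one,
    Real.sqrt_eq_rpow]

lemma sqrt_mul_cube_div_eight (c : ℝ) {n : ℝ} (hn : 0 ≤ n) :
    √(c * n ^ 3 / 8) = √c / (2 * √2) * n ^ (3 / 2 : ℝ) := by
  have h8 : √8 = 2 * √2 := by
    rw [show (8 : ℝ) = 2 ^ 2 * 2 by norm_num, Real.sqrt_mul (by positivity),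
      Real.sqrt_sq (by norm_num)]
  rw [rpow_three_halves hn, Real.sqrt_div' _ (by norm_num), Real.sqrt_mul' c (by positivity),
    show n ^ 3 = n ^ 2 * n by ring, Real.sqrt_mul (sq_nonneg n), Real.sqrt_sq hn, h8]
  ring

lemma mul_le_mul_rpow_three_halves {c ε n : ℝ} (hε : 0 < ε) (hn : (c / ε) ^ 2 ≤ n) :
    c * n ≤ ε * n ^ (3 / 2 : ℝ) := by
  have hn0 : 0 ≤ n := (sq_nonneg _).trans hn
  have hc : c ≤ ε * √n := by
    rw [← div_le_iff₀' hε]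
    exact Real.le_sqrt_of_sq_le hn
  rw [rpow_three_halves hn0]
  nlinarith

theorem Set.InjOn.update_insert {α β : Type*} [DecidableEq α] {f : α → β} {s : Set α} {a : α}
    {b : β} (hf : Set.InjOn f s) (ha : a ∉ s) (hb : b ∉ f '' s) :
    Set.InjOn (Function.update f a b) (insert a s) := by
  have heq : Set.EqOn (Function.update f a b) f s := fun x hx =>
    Function.update_of_ne (ne_of_mem_of_not_mem hx ha) _ _
  rw [Set.injOn_insert ha, heq.image_eq, Function.update_self]
  exact ⟨hf.congr heq.symm, hb⟩

open Finset
open scoped Classical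

namespace SimpleGraph

section Tree

variable {α : Type*} {T : SimpleGraph α}

lemma Connected.exists_adj_dist_lt (hT : T.Connected) {r a : α} (ha : a ≠ r) :
    ∃ p, T.Adj a p ∧ T.dist r p < T.dist r a := by
  obtain ⟨q, hq⟩ := hT.exists_walk_length_eq_dist a r
  cases q with
  | nil => exact absurd rfl ha
  | cons hadj q =>
    refine ⟨_, hadj, ?_⟩
    rw [dist_comm, dist_comm (u := r), ← hq, Walk.length_cons]
    exact Nat.lt_succ_of_le (dist_le q)

lemma IsTree.eq_of_adj_of_dist_lt (hT : T.IsTree) (r : α) {a y z : α} (hy : T.Adj a y)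
    (hz : T.Adj a z) (hdy : T.dist r y < T.dist r a) (hdz : T.dist r z < T.dist r a) : y = z := by
  have path_to (v : α) (hv : T.Adj v a) (hdv : T.dist r v < T.dist r a) :
      ∃ q : T.Walk r v, (q.concat hv).IsPath := by
    obtain ⟨q, hq⟩ := hT.connected.exists_walk_length_eq_dist r v
    refine ⟨q, Walk.isPath_of_length_eq_dist _ ?_⟩
    have := hT.dist_eq_dist_add_one_of_adj r hv
    rw [Walk.length_concat, hq]
    omega
  obtain ⟨qy, hqy⟩ := path_to y hy.symm hdy
  obtain ⟨qz, hqz⟩ := path_to z hz.symm hdz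
  have := (hT.isAcyclic.subsingleton_path r a).elim ⟨_, hqy⟩ ⟨_, hqz⟩
  exact (Walk.concat_inj (congrArg Subtype.val this)).1

end Tree

section Richness

variable {V : Type*} [Fintype V] (G : SimpleGraph V) (k : ℕ)

def IsHub (R : V → V → Prop) (x w : V) : Prop :=
  k ≤ #{z ∈ G.neighborFinset w | R x z}

def IsRich : ℕ → V → V → Prop
  | 0, _, _ => True
  | s + 1, x, y =>
      k ≤ #{w ∈ G.neighborFinset x ∩ G.neighborFinset y | G.IsHub k (IsRich s) x w} ∧
      k ≤ #{w ∈ G.neighborFinset x ∩ G.neighborFinset y | G.IsHub k (IsRich s) y w}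

variable {G k}

lemma IsHub.mono {R R' : V → V → Prop} (hR : ∀ x y, R x y → R' x y) {x w : V}
    (h : G.IsHub k R x w) : G.IsHub k R' x w :=
  h.trans (card_le_card (monotone_filter_right _ fun _ _ hz => hR _ _ hz))

lemma IsRich.of_succ : ∀ {s : ℕ} {x y : V}, G.IsRich k (s + 1) x y → G.IsRich k s x y
  | 0, _, _, _ => trivial
  | s + 1, _, _, ⟨hx, hy⟩ =>
    have hub : ∀ v w, G.IsHub k (G.IsRich k (s + 1)) v w → G.IsHub k (G.IsRich k s) v w :=
      fun _ _ => IsHub.mono fun _ _ => IsRich.of_succ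
    ⟨hx.trans (card_le_card (monotone_filter_right _ fun _ _ => hub _ _)),
      hy.trans (card_le_card (monotone_filter_right _ fun _ _ => hub _ _))⟩

lemma IsRich.anti {s s' : ℕ} (hs : s' ≤ s) {x y : V} (h : G.IsRich k s x y) :
    G.IsRich k s' x y := by
  induction s, hs using Nat.le_induction with
  | base => exact h
  | succ s _ ih => exact ih h.of_succ

lemma IsRich.symm : ∀ {s : ℕ} {x y : V}, G.IsRich k s x y → G.IsRich k s y x
  | 0, _, _, _ => trivial
  | _ + 1, _, _, ⟨hx, hy⟩ => by rw [IsRich, inter_comm]; exact ⟨hy, hx⟩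

lemma card_inter_lt_of_not_isRich_succ {s : ℕ} {x y : V} (h : ¬ G.IsRich k (s + 1) x y) :
    #(G.neighborFinset x ∩ G.neighborFinset y) <
      k + #{w ∈ G.neighborFinset x ∩ G.neighborFinset y | ¬ G.IsHub k (G.IsRich k s) x w} +
        #{w ∈ G.neighborFinset x ∩ G.neighborFinset y | ¬ G.IsHub k (G.IsRich k s) y w} := by
  have hx := card_filter_add_card_filter_not (s := G.neighborFinset x ∩ G.neighborFinset y)
    (fun w => G.IsHub k (G.IsRich k s) x w)
  have hy := card_filter_add_card_filter_not (s := G.neighborFinset x ∩ G.neighborFinset y)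
    (fun w => G.IsHub k (G.IsRich k s) y w)
  simp only [IsRich, not_and_or, not_le] at h
  omega

lemma IsRich.exists_isHub (hk : 0 < k) {x y : V} (h : G.IsRich k k x y) :
    ∃ w, G.Adj y w ∧ G.IsHub k (G.IsRich k (k - 1)) y w := by
  obtain ⟨-, hhubs⟩ : G.IsRich k (k - 1 + 1) x y := by rwa [Nat.sub_add_cancel hk]
  obtain ⟨w, hw⟩ := card_pos.1 (hk.trans_le hhubs)
  simp only [mem_filter, mem_inter, mem_neighborFinset] at hw
  exact ⟨w, hw.1.2, hw.2⟩

lemma card_filter_not_isHub_le (R : V → V → Prop) (Q : Finset (V × V))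
    (hQ : ∀ p ∈ Q, R p.1 p.2) (w : V) :
    #{p ∈ Q | w ∈ G.neighborFinset p.1 ∩ G.neighborFinset p.2 ∧ ¬ G.IsHub k R p.1 w} ≤
      k * G.degree w := by
  rw [← card_neighborFinset_eq_degree]
  refine card_le_mul_card_image_of_maps_to (f := Prod.fst) (fun p hp => ?_) k fun y _ => ?_
  · simp only [mem_filter, mem_inter, mem_neighborFinset] at hp
    exact (mem_neighborFinset _ _ _).2 hp.2.1.1.symm
  by_cases hy : G.IsHub k R y w
  · rw [card_eq_zero.2 <| filter_eq_empty_iff.2 fun p hp hpy => (mem_filter.1 hp).2.2 (hpy ▸ hy)]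
    exact Nat.zero_le k
  calc _ ≤ #{z ∈ G.neighborFinset w | R y z} := by
        refine card_le_card_of_injOn Prod.snd (fun p hp => ?_) fun p hp q hq hpq => ?_
        · simp only [coe_filter, mem_filter, mem_inter, mem_neighborFinset,
            Set.mem_ofPred_eq] at hp ⊢
          exact ⟨hp.1.2.1.2.symm, hp.2 ▸ hQ p hp.1.1⟩
        · simp only [coe_filter, Set.mem_ofPred_eq] at hp hq
          exact Prod.ext (hp.2.trans hq.2.symm) hpq
    _ ≤ k := (not_le.1 hy).le

lemma sum_card_filter_not_isHub_le (R : V → V → Prop) (Q : Finset (V × V))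
    (hQ : ∀ p ∈ Q, R p.1 p.2) :
    ∑ p ∈ Q, #{w ∈ G.neighborFinset p.1 ∩ G.neighborFinset p.2 | ¬ G.IsHub k R p.1 w} ≤
      k * (2 * #G.edgeFinset) := by
  calc _ = ∑ p ∈ Q, #{w | w ∈ G.neighborFinset p.1 ∩ G.neighborFinset p.2 ∧
          ¬ G.IsHub k R p.1 w} := by
          simp only [← filter_filter, filter_univ_mem]
    _ = ∑ w, #{p ∈ Q | w ∈ G.neighborFinset p.1 ∩ G.neighborFinset p.2 ∧
          ¬ G.IsHub k R p.1 w} := sum_card_bipartiteAbove_eq_sum_card_bipartiteBelow _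
    _ ≤ ∑ w, k * G.degree w := sum_le_sum fun w _ => card_filter_not_isHub_le R Q hQ w
    _ = k * (2 * #G.edgeFinset) := by rw [← mul_sum, sum_degrees_eq_twice_card_edges]

lemma sum_card_filter_not_isHub_isRich_le (Q : Finset (V × V)) (d : V × V → ℕ)
    (hd : ∀ p ∈ Q, d p < k ∧ G.IsRich k (d p) p.1 p.2) :
    ∑ p ∈ Q, #{w ∈ G.neighborFinset p.1 ∩ G.neighborFinset p.2 |
        ¬ G.IsHub k (G.IsRich k (d p)) p.1 w} ≤ k * (k * (2 * #G.edgeFinset)) := by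
  rw [← sum_fiberwise_of_maps_to (t := range k) fun p hp => mem_range.2 (hd p hp).1]
  calc _ ≤ ∑ _s ∈ range k, k * (2 * #G.edgeFinset) := sum_le_sum fun s _ => by
          rw [sum_congr rfl fun p hp => by rw [(mem_filter.1 hp).2]]
          exact sum_card_filter_not_isHub_le _ _ fun p hp =>
            (mem_filter.1 hp).2 ▸ (hd p (mem_filter.1 hp).1).2
    _ = k * (k * (2 * #G.edgeFinset)) := by rw [sum_const, card_range, smul_eq_mul]

lemma sum_card_inter_le_of_forall_not_isRich (hrich : ∀ x y, ¬ G.IsRich k k x y)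
    (Q : Finset (V × V)) :
    ∑ p ∈ Q, #(G.neighborFinset p.1 ∩ G.neighborFinset p.2) ≤
      (k - 1) * #Q + 4 * k ^ 2 * #G.edgeFinset := by
  set depth : V × V → ℕ := fun p => Nat.findGreatest (fun s => G.IsRich k s p.1 p.2) k
  have hdepth_rich (p : V × V) : G.IsRich k (depth p) p.1 p.2 :=
    Nat.findGreatest_spec (P := fun s => G.IsRich k s p.1 p.2) (Nat.zero_le k) trivial
  have hdepth_lt (p : V × V) : depth p < k :=
    (Nat.findGreatest_le k).lt_of_ne fun h => hrich p.1 p.2 (h ▸ hdepth_rich p)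
  have hfst := sum_card_filter_not_isHub_isRich_le Q depth fun p _ => ⟨hdepth_lt p, hdepth_rich p⟩
  have hsnd := sum_card_filter_not_isHub_isRich_le (Q.map (Equiv.prodComm V V).toEmbedding)
    (depth ∘ Prod.swap) fun p _ => ⟨hdepth_lt _, (hdepth_rich _).symm⟩
  rw [sum_map] at hsnd
  replace hsnd : ∑ p ∈ Q, #{w ∈ G.neighborFinset p.1 ∩ G.neighborFinset p.2 |
      ¬ G.IsHub k (G.IsRich k (depth p)) p.2 w} ≤ k * (k * (2 * #G.edgeFinset)) := by
    refine le_of_eq_of_le (sum_congr rfl fun p _ => ?_) hsnd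
    simp only [Equiv.coe_toEmbedding, Equiv.prodComm_apply, Prod.fst_swap, Prod.snd_swap,
      Function.comp_apply, Prod.swap_swap]
    congr 1
    ext w
    simp only [mem_filter, mem_inter]
    tauto
  calc _ ≤ ∑ p ∈ Q, ((k - 1) +
        #{w ∈ G.neighborFinset p.1 ∩ G.neighborFinset p.2 |
          ¬ G.IsHub k (G.IsRich k (depth p)) p.1 w} +
        #{w ∈ G.neighborFinset p.1 ∩ G.neighborFinset p.2 |
          ¬ G.IsHub k (G.IsRich k (depth p)) p.2 w}) := sum_le_sum fun p _ => by
          have := card_inter_lt_of_not_isRich_succ (Nat.findGreatest_is_greatest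
            (P := fun s => G.IsRich k s p.1 p.2) (lt_add_one (depth p)) (hdepth_lt p))
          omega
    _ ≤ (k - 1) * #Q + 4 * k ^ 2 * #G.edgeFinset := by
      rw [sum_add_distrib, sum_add_distrib, sum_const, smul_eq_mul, mul_comm]
      nlinarith

lemma sum_degree_sq_eq_sum_card_inter {A B : Finset V} (hG : G.IsBipartiteWith A B) :
    ∑ w ∈ B, G.degree w ^ 2 = ∑ p ∈ A ×ˢ A, #(G.neighborFinset p.1 ∩ G.neighborFinset p.2) := by
  calc ∑ w ∈ B, G.degree w ^ 2
      = ∑ w ∈ B, #{p ∈ A ×ˢ A | w ∈ G.neighborFinset p.1 ∩ G.neighborFinset p.2} :=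
        sum_congr rfl fun w hw => by
          rw [← card_neighborFinset_eq_degree, sq, ← card_product]
          congr 1
          ext p
          simp only [mem_product, mem_filter, mem_inter, mem_neighborFinset]
          constructor
          · rintro ⟨h₁, h₂⟩
            exact ⟨⟨hG.mem_of_mem_adj' hw h₁.symm, hG.mem_of_mem_adj' hw h₂.symm⟩, h₁.symm, h₂.symm⟩
          · rintro ⟨-, h₁, h₂⟩
            exact ⟨h₁.symm, h₂.symm⟩
    _ = ∑ p ∈ A ×ˢ A, #{w ∈ B | w ∈ G.neighborFinset p.1 ∩ G.neighborFinset p.2} :=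
        sum_card_bipartiteAbove_eq_sum_card_bipartiteBelow _
    _ = ∑ p ∈ A ×ˢ A, #(G.neighborFinset p.1 ∩ G.neighborFinset p.2) :=
        sum_congr rfl fun p hp => by
          rw [filter_mem_eq_inter, inter_eq_right.2 (inter_subset_left.trans
            (isBipartiteWith_neighborFinset_subset hG (mem_product.1 hp).1))]

lemma card_edgeFinset_sq_le_of_forall_not_isRich {A B : Finset V} (hG : G.IsBipartiteWith A B)
    (hrich : ∀ x y, ¬ G.IsRich k k x y) :
    #G.edgeFinset ^ 2 ≤ #B * ((k - 1) * #A ^ 2 + 4 * k ^ 2 * #G.edgeFinset) := by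
  calc #G.edgeFinset ^ 2 = (∑ w ∈ B, G.degree w) ^ 2 := by
        rw [isBipartiteWith_sum_degrees_eq_card_edges' hG]
    _ ≤ #B * ∑ w ∈ B, G.degree w ^ 2 := sq_sum_le_card_mul_sum_sq
    _ ≤ #B * ((k - 1) * #A ^ 2 + 4 * k ^ 2 * #G.edgeFinset) := by
        rw [sum_degree_sq_eq_sum_card_inter hG, sq #A, ← card_product]
        exact Nat.mul_le_mul_left _ (sum_card_inter_le_of_forall_not_isRich hrich _)

theorem IsBipartite.card_edgeFinset_le_of_forall_not_isRich (hG : G.IsBipartite)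
    (hrich : ∀ x y, ¬ G.IsRich k k x y) :
    (#G.edgeFinset : ℝ) ≤
      √((k - 1 : ℕ) * (Fintype.card V : ℝ) ^ 3 / 8) + 4 * k ^ 2 * Fintype.card V := by
  obtain ⟨A, B, hAB⟩ := hG.exists_isBipartiteWith
  wlog hle : #A.toFinset ≤ #B.toFinset generalizing A B
  · exact this B A hAB.symm (by omega)
  have hsq := card_edgeFinset_sq_le_of_forall_not_isRich (A := A.toFinset) (B := B.toFinset)
    (by simpa using hAB) hrich
  have hcard : #A.toFinset + #B.toFinset ≤ Fintype.card V := by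
    rw [← card_union_of_disjoint (by simpa using hAB.disjoint)]
    exact card_le_univ _
  set e := #G.edgeFinset
  set a := #A.toFinset
  set b := #B.toFinset
  set n := Fintype.card V
  have hsq' : (e : ℝ) ^ 2 ≤ b * ((k - 1 : ℕ) * a ^ 2 + 4 * k ^ 2 * e) := by exact_mod_cast hsq
  have hcube := eight_mul_sq_mul_le_cube (Nat.cast_nonneg a) (by exact_mod_cast hle)
    (by exact_mod_cast hcard : (a : ℝ) + b ≤ n)
  have hbn : (b : ℝ) ≤ n := by exact_mod_cast (Nat.le_add_left b a).trans hcard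
  refine le_sqrt_add_of_sq_le_add_mul (by positivity) (hsq'.trans ?_)
  have hk1 : (0 : ℝ) ≤ (k - 1 : ℕ) := Nat.cast_nonneg _
  have he : (0 : ℝ) ≤ 4 * k ^ 2 * e := by positivity
  nlinarith [mul_le_mul_of_nonneg_left hcube hk1, mul_le_mul_of_nonneg_right hbn he]

end Richness

section Ladder

variable {V α : Type*} [Fintype V] {G : SimpleGraph V} {T : SimpleGraph α} {A B : Set V}
  {k : ℕ} {S : Finset α} {U W : α → V}

variable (G T A B k) in
/-- An embedding of `K₂ □ T[S]` putting the rung of `x` on the edge `U x W x`, with `U x ∈ A` and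
`W x ∈ B`. The hub condition, whose depth drops as `S` grows, is what allows it to be extended. -/
structure IsPartialLadder (S : Finset α) (U W : α → V) : Prop where
  mapsTo_bot : Set.MapsTo U S A
  mapsTo_top : Set.MapsTo W S B
  injOn_bot : Set.InjOn U S
  injOn_top : Set.InjOn W S
  adj_rung : ∀ x ∈ S, G.Adj (U x) (W x)
  adj_cross : ∀ x ∈ S, ∀ y ∈ S, T.Adj x y → G.Adj (U x) (W y)
  isHub : ∀ x ∈ S, G.IsHub k (G.IsRich k (k - #S)) (U x) (W x)

lemma isPartialLadder_empty : G.IsPartialLadder T A B k ∅ U W where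
  mapsTo_bot := by simp [Set.MapsTo]
  mapsTo_top := by simp [Set.MapsTo]
  injOn_bot := by simp
  injOn_top := by simp
  adj_rung := by simp
  adj_cross := by simp
  isHub := by simp

lemma IsBipartiteWith.exists_isPartialLadder_singleton (hG : G.IsBipartiteWith A B)
    (hk : 0 < k) {x y : V} (hy : y ∈ A) (h : G.IsRich k k x y) (a : α) :
    ∃ U W, G.IsPartialLadder T A B k {a} U W := by
  obtain ⟨w, hyw, hw⟩ := h.exists_isHub hk
  exact ⟨fun _ => y, fun _ => w, {
    mapsTo_bot := fun _ _ => hy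
    mapsTo_top := fun _ _ => hG.mem_of_mem_adj hy hyw
    injOn_bot := by simp
    injOn_top := by simp
    adj_rung := fun _ _ => hyw
    adj_cross := by simp
    isHub := by simpa using hw }⟩

lemma IsPartialLadder.insert_update (h : G.IsPartialLadder T A B k S U W) {a p : α} (ha : a ∉ S)
    (hnbr : ∀ y ∈ S, T.Adj a y → y = p) {u w : V} (hu : u ∈ A) (hw : w ∈ B)
    (huU : u ∉ U '' S) (hwW : w ∉ W '' S) (huw : G.Adj u w) (hup : G.Adj u (W p))
    (hpw : G.Adj (U p) w) (hhub : G.IsHub k (G.IsRich k (k - (#S + 1))) u w) :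
    G.IsPartialLadder T A B k (insert a S) (Function.update U a u) (Function.update W a w) := by
  have hU : ∀ x ∈ S, Function.update U a u x = U x := fun x hx =>
    Function.update_of_ne (ne_of_mem_of_not_mem hx ha) _ _
  have hW : ∀ x ∈ S, Function.update W a w x = W x := fun x hx =>
    Function.update_of_ne (ne_of_mem_of_not_mem hx ha) _ _
  refine ⟨?_, ?_, ?_, ?_, ?_, ?_, ?_⟩
  · intro x hx
    rcases mem_insert.1 hx with rfl | hx
    · simpa
    · simpa [hU x hx] using h.mapsTo_bot hx
  · intro x hx
    rcases mem_insert.1 hx with rfl | hx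
    · simpa
    · simpa [hW x hx] using h.mapsTo_top hx
  · rw [coe_insert]
    exact h.injOn_bot.update_insert ha huU
  · rw [coe_insert]
    exact h.injOn_top.update_insert ha hwW
  · intro x hx
    rcases mem_insert.1 hx with rfl | hx
    · simpa
    · simpa [hU x hx, hW x hx] using h.adj_rung x hx
  · intro x hx y hy hxy
    rcases mem_insert.1 hx with rfl | hxS <;> rcases mem_insert.1 hy with rfl | hyS
    · exact absurd rfl hxy.ne
    · obtain rfl := hnbr y hyS hxy
      simpa [hW _ hyS] using hup
    · obtain rfl := hnbr x hxS hxy.symm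
      simpa [hU _ hxS] using hpw
    · simpa [hU x hxS, hW y hyS] using h.adj_cross x hxS y hyS hxy
  · intro x hx
    rw [card_insert_of_notMem ha]
    rcases mem_insert.1 hx with rfl | hx
    · simpa
    · rw [hU x hx, hW x hx]
      exact (h.isHub x hx).mono fun _ _ => IsRich.anti (by omega)

lemma IsPartialLadder.exists_insert (hG : G.IsBipartiteWith A B)
    (h : G.IsPartialLadder T A B k S U W) (hS : #S < k) {a p : α} (ha : a ∉ S) (hp : p ∈ S)
    (hnbr : ∀ y ∈ S, T.Adj a y → y = p) :
    ∃ U' W', G.IsPartialLadder T A B k (insert a S) U' W' := by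
  obtain ⟨u, hu, huU⟩ := exists_mem_notMem_of_card_lt_card (s := S.image U)
    (card_image_le.trans_lt (hS.trans_le (h.isHub p hp)))
  simp only [mem_filter, mem_neighborFinset] at hu
  obtain ⟨-, hhubs⟩ : G.IsRich k (k - (#S + 1) + 1) (U p) u := by
    rw [show k - (#S + 1) + 1 = k - #S by omega]; exact hu.2
  obtain ⟨w, hw, hwW⟩ := exists_mem_notMem_of_card_lt_card (s := S.image W)
    (card_image_le.trans_lt (hS.trans_le hhubs))
  simp only [mem_filter, mem_inter, mem_neighborFinset] at hw
  have huA : u ∈ A := hG.mem_of_mem_adj' (h.mapsTo_top hp) hu.1.symm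
  rw [← mem_coe, coe_image] at huU hwW
  exact ⟨_, _, h.insert_update ha hnbr huA (hG.mem_of_mem_adj huA hw.1.2) huU hwW hw.1.2 hu.1.symm
    hw.1.1 hw.2⟩

lemma IsPartialLadder.containsCopy [Fintype α] (h : G.IsPartialLadder T A B k univ U W)
    (hAB : Disjoint A B) (hT : T.Colorable 2) :
    ContainsCopy ((⊤ : SimpleGraph (Fin 2)).boxProd T) G := by
  obtain ⟨c⟩ := hT
  have hUW (x y : α) : U x ≠ W y := fun hxy =>
    hAB.ne_of_mem (h.mapsTo_bot (mem_coe.2 (mem_univ x)))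
      (h.mapsTo_top (mem_coe.2 (mem_univ y))) hxy
  -- `T`-edges join vertices of different colours, so they land on cross edges `U x W y`.
  refine ⟨fun q => if q.1 = c q.2 then U q.2 else W q.2, ?_, ?_⟩
  · rintro ⟨i, x⟩ ⟨j, y⟩ hxy
    dsimp only at hxy
    split_ifs at hxy with hi hj hj
    · obtain rfl := h.injOn_bot (by simp) (by simp) hxy
      rw [hi, hj]
    · exact absurd hxy (hUW x y)
    · exact absurd hxy.symm (hUW y x)
    · obtain rfl := h.injOn_top (by simp) (by simp) hxy
      exact Prod.ext (show i = j by omega) rfl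
  · rintro ⟨i, x⟩ ⟨j, y⟩ hadj
    rcases boxProd_adj.1 hadj with ⟨hij, rfl : x = y⟩ | ⟨hxy, rfl : i = j⟩
    · have hij : i ≠ j := hij.ne
      by_cases hi : i = c x
      · have hj : j ≠ c x := by omega
        simpa [hi, hj] using h.adj_rung x (mem_univ x)
      · have hj : j = c x := by omega
        simpa [hi, hj] using (h.adj_rung x (mem_univ x)).symm
    · have hc : c x ≠ c y := c.valid hxy
      by_cases hi : i = c x
      · have hi' : i ≠ c y := by omega
        simpa [hi, hi', hc] using h.adj_cross x (mem_univ x) y (mem_univ y) hxy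
      · have hi' : i = c y := by omega
        simpa [hi, hi', hc.symm] using (h.adj_cross y (mem_univ y) x (mem_univ x) hxy.symm).symm

theorem IsBipartiteWith.containsCopy_of_isRich [Fintype α] (hG : G.IsBipartiteWith A B)
    (hT : T.IsTree) (hk : Fintype.card α ≤ k) {x y : V} (hy : y ∈ A) (h : G.IsRich k k x y) :
    ContainsCopy ((⊤ : SimpleGraph (Fin 2)).boxProd T) G := by
  obtain ⟨r⟩ := hT.connected.nonempty
  suffices ∀ S : Finset α, (∀ a ∈ S, ∀ p, T.Adj a p → T.dist r p < T.dist r a → p ∈ S) →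
      ∃ U W, G.IsPartialLadder T A B k S U W by
    obtain ⟨U, W, hUW⟩ := this univ fun _ _ p _ _ => mem_univ p
    exact hUW.containsCopy hG.disjoint hT.colorable_two
  intro S
  induction S using Finset.induction_on_max_value (T.dist r) with
  | empty => exact fun _ => ⟨fun _ => y, fun _ => y, isPartialLadder_empty⟩
  | insert a S ha hmax ih =>
    intro hclosed
    rcases S.eq_empty_or_nonempty with rfl | ⟨x₀, hx₀⟩
    · exact hG.exists_isPartialLadder_singleton ((Fintype.card_pos_iff.2 ⟨r⟩).trans_le hk) hy h a
    have har : a ≠ r := by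
      rintro rfl
      have := hmax x₀ hx₀
      rw [dist_self, Nat.le_zero, hT.connected.dist_eq_zero_iff] at this
      exact ha (this ▸ hx₀)
    obtain ⟨p, hap, hpa⟩ := hT.connected.exists_adj_dist_lt har
    have hpS : p ∈ S := (mem_insert.1 (hclosed a (mem_insert_self a S) p hap hpa)).resolve_left
      (by rintro rfl; exact lt_irrefl _ hpa)
    obtain ⟨U, W, hUW⟩ := ih fun z hz q hzq hqz =>
      (mem_insert.1 (hclosed z (mem_insert_of_mem hz) q hzq hqz)).resolve_left
        (by rintro rfl; exact absurd (hmax z hz) (not_le.2 hqz))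
    have hS : #S < k := by
      have := card_le_univ (insert a S)
      rw [card_insert_of_notMem ha] at this
      omega
    exact hUW.exists_insert hG hS ha hpS fun z hz haz =>
      hT.eq_of_adj_of_dist_lt r haz hap ((hmax z hz).lt_of_ne (hT.dist_ne_of_adj r haz).symm) hpa

theorem IsBipartite.containsCopy_of_isRich [Fintype α] (hG : G.IsBipartite) (hT : T.IsTree)
    (hk : Fintype.card α ≤ k) {x y : V} (h : G.IsRich k k x y) :
    ContainsCopy ((⊤ : SimpleGraph (Fin 2)).boxProd T) G := by
  obtain ⟨A, B, hAB⟩ := hG.exists_isBipartiteWith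
  obtain ⟨w, hyw, -⟩ := h.exists_isHub ((Fintype.card_pos_iff.2 hT.connected.nonempty).trans_le hk)
  rcases hAB.mem_of_adj hyw with ⟨hy, -⟩ | ⟨hy, -⟩
  · exact hAB.containsCopy_of_isRich hT hk hy h
  · exact hAB.symm.containsCopy_of_isRich hT hk hy h

end Ladder

end SimpleGraph

theorem ex_bip_K2_tree_upper_general (t : ℕ) (T : SimpleGraph (Fin t)) (hT : T.IsTree)
    (ε : ℝ) (hε : 0 < ε) :
    ∃ N : ℕ, ∀ n : ℕ, N ≤ n → ∀ G : SimpleGraph (Fin n), G.Colorable 2 →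
      ¬ ContainsCopy ((⊤ : SimpleGraph (Fin 2)).boxProd T) G →
      (G.edgeSet.ncard : ℝ)
        ≤ (Real.sqrt ((t : ℝ) - 1) / (2 * Real.sqrt 2) + ε) * (n : ℝ) ^ (3/2 : ℝ) := by
  refine ⟨⌈(4 * t ^ 2 / ε) ^ 2⌉₊, fun n hn G hG hfree => ?_⟩
  have ht : 1 ≤ t := Fintype.card_fin t ▸ Fintype.card_pos_iff.2 hT.connected.nonempty
  have hE := IsBipartite.card_edgeFinset_le_of_forall_not_isRich hG fun x y h =>
    hfree (IsBipartite.containsCopy_of_isRich hG hT (Fintype.card_fin t).le h)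
  rw [Fintype.card_fin, Nat.cast_sub ht, Nat.cast_one] at hE
  rw [← coe_edgeFinset, Set.ncard_coe_finset, add_mul,
    ← sqrt_mul_cube_div_eight _ (Nat.cast_nonneg n)]
  exact hE.trans (add_le_add_right (mul_le_mul_rpow_three_halves hε
    ((Nat.le_ceil _).trans (Nat.cast_le.2 hn))) _)

theorem ex_bip_K2_tree_upper (t : ℕ) (ht : 2 ≤ t) (T : SimpleGraph (Fin t)) (hT : T.IsTree)
    (ε : ℝ) (hε : 0 < ε) :
    ∃ N : ℕ, ∀ n : ℕ, N ≤ n → ∀ G : SimpleGraph (Fin n), G.Colorable 2 →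
      ¬ ContainsCopy ((⊤ : SimpleGraph (Fin 2)).boxProd T) G →
      (G.edgeSet.ncard : ℝ)
        ≤ (Real.sqrt ((t : ℝ) - 1) / (2 * Real.sqrt 2) + ε) * (n : ℝ) ^ (3/2 : ℝ) :=
  ex_bip_K2_tree_upper_general t T hT ε hε
end

section
/- For every integer t ≥ 1 and every ε > 0 there exists N such that for all n ≥ N, every bipartite graph G on n vertices that contains no subgraph isomorphic to B_t satisfies e(G) ≤ (√t/(2√2) + ε)·n^{3/2}. (That is, ex_bip(n, B_t) ≤ (√t/(2√2))(1+o(1))·n^{3/2}.) -/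
open SimpleGraph

/-!
Let `A`, `B` be the two sides and `e` the number of edges. Counting paths of length two,
`∑_{v ∈ B} d(v)² = ∑_{u, u' ∈ A} codeg(u, u')`. Fix `u ∈ A`. The `u'` with `codeg(u, u') ≤ t`
contribute at most `t |A|`. A neighbour `v` of `u` is adjacent to fewer than `t` vertices
`u' ≠ u` with `codeg(u, u') > t`: otherwise `t` four-cycles through the edge `uv`, with
distinct fourth vertices chosen by Hall's theorem, form a copy of `B_t`. So `u' = u` and the
remaining `u'` contribute at most `t d(u)`, whence `∑_B d² ≤ t |A|² + t e`, and Cauchy–Schwarz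
gives `e² ≤ |B| (t |A|² + t e)`. Adding the mirror inequality and using `4 |A| |B| ≤ n²` yields
`8 e² ≤ t n³ + 4 t n e`, that is `e ≤ √(t/8) n^{3/2} + t n / 2`.
-/

open Finset

theorem exists_injective_forall_mem_of_card_le {ι α : Type*} [Fintype ι] [DecidableEq α]
    (f : ι → Finset α) (hf : ∀ i, Fintype.card ι ≤ #(f i)) :
    ∃ g : ι → α, Function.Injective g ∧ ∀ i, g i ∈ f i := by
  refine (all_card_le_biUnion_card_iff_exists_injective f).mp fun s => ?_
  obtain rfl | ⟨i, hi⟩ := s.eq_empty_or_nonempty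
  · simp
  · exact (card_le_univ s).trans ((hf i).trans (card_le_card (subset_biUnion_of_mem f hi)))

variable {V : Type*}

namespace SimpleGraph

theorem containsCopy_Bgraph {G : SimpleGraph V} {t : ℕ} {u v : V} {x w : Fin t → V}
    (huv : G.Adj u v) (hux : ∀ j, G.Adj u (x j)) (hvw : ∀ j, G.Adj v (w j))
    (hxw : ∀ j, G.Adj (x j) (w j)) (hx : Function.Injective x) (hw : Function.Injective w)
    (hx_ne_v : ∀ j, x j ≠ v) (hw_ne_u : ∀ j, w j ≠ u) (hx_ne_w : ∀ i j, x i ≠ w j) :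
    ContainsCopy (Bgraph t) G := by
  refine ⟨fun p => Sum.elim (fun _ => ![u, v] p.1) (fun j => ![x j, w j] p.1) p.2, ?_, ?_⟩
  · rintro ⟨i, _ | j⟩ ⟨i', _ | j'⟩ h <;> fin_cases i <;> fin_cases i' <;>
      simp_all [G.ne_of_adj, (G.ne_of_adj _).symm, Fin.fin_one_eq_zero, hx.eq_iff, hw.eq_iff,
        fun i j => (hx_ne_w i j).symm]
  · rintro ⟨i, _ | j⟩ ⟨i', _ | j'⟩ h <;> fin_cases i <;> fin_cases i' <;>
      simp_all [Bgraph, boxProd_adj, G.adj_comm]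

def codegree_s5 [Fintype V] [DecidableEq V] (G : SimpleGraph V) [DecidableRel G.Adj]
    (u u' : V) : ℕ :=
  #(G.neighborFinset u ∩ G.neighborFinset u')

section Bipartite

variable [Fintype V] [DecidableEq V] {G : SimpleGraph V} [DecidableRel G.Adj] {A B : Finset V}
  {t : ℕ}

theorem codegree_self (u : V) : G.codegree_s5 u u = G.degree u := by
  rw [codegree_s5, inter_self, card_neighborFinset_eq_degree]

theorem sum_sq_degree_eq_sum_sum_codegree (hG : G.IsBipartiteWith A B) :
    ∑ v ∈ B, G.degree v ^ 2 = ∑ u ∈ A, ∑ u' ∈ A, G.codegree_s5 u u' := by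
  have hdeg : ∀ v ∈ B, G.degree v = ∑ u ∈ A, if G.Adj u v then 1 else 0 := fun v hv => by
    rw [← card_neighborFinset_eq_degree, isBipartiteWith_neighborFinset' hG hv, card_filter]
  have hcodeg : ∀ u ∈ A, ∀ u' ∈ A, G.codegree_s5 u u' =
      ∑ v ∈ B, if G.Adj u v ∧ G.Adj u' v then 1 else 0 := fun u hu u' hu' => by
    rw [codegree_s5, isBipartiteWith_neighborFinset hG hu, isBipartiteWith_neighborFinset hG hu',
      ← filter_and, card_filter]
  calc ∑ v ∈ B, G.degree v ^ 2
      = ∑ v ∈ B, ∑ u ∈ A, ∑ u' ∈ A, if G.Adj u v ∧ G.Adj u' v then 1 else 0 :=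
        sum_congr rfl fun v hv => by
          simp only [hdeg v hv, sq, sum_mul_sum, ite_zero_mul_ite_zero, mul_one]
    _ = ∑ u ∈ A, ∑ u' ∈ A, ∑ v ∈ B, if G.Adj u v ∧ G.Adj u' v then 1 else 0 := by
        rw [sum_comm]; exact sum_congr rfl fun _ _ => sum_comm
    _ = _ := sum_congr rfl fun u hu => sum_congr rfl fun u' hu' => (hcodeg u hu u' hu').symm

theorem card_filter_lt_codegree_lt (hG : G.IsBipartiteWith A B)
    (hfree : ¬ ContainsCopy (Bgraph t) G) {u v : V} (hu : u ∈ A) (huv : G.Adj u v) :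
    #{u' ∈ (G.neighborFinset v).erase u | t < G.codegree_s5 u u'} < t := by
  by_contra! hcard
  obtain ⟨w, hw, hw_mem⟩ := exists_injective_forall_mem_of_card_le
    (fun _ : Fin t => {u' ∈ (G.neighborFinset v).erase u | t < G.codegree_s5 u u'})
    fun _ => by simpa using hcard
  simp only [mem_filter, mem_erase, mem_neighborFinset] at hw_mem
  obtain ⟨x, hx, hx_mem⟩ := exists_injective_forall_mem_of_card_le
    (fun j => (G.neighborFinset u ∩ G.neighborFinset (w j)).erase v) fun j => by
      have herase := pred_card_le_card_erase
        (s := G.neighborFinset u ∩ G.neighborFinset (w j)) (a := v)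
      have hcodeg := (hw_mem j).2
      rw [codegree_s5] at hcodeg
      rw [Fintype.card_fin]
      omega
  simp only [mem_erase, mem_inter, mem_neighborFinset] at hx_mem
  have hvB : v ∈ B := hG.mem_of_mem_adj hu huv
  have hxB : ∀ j, x j ∈ B := fun j => hG.mem_of_mem_adj hu (hx_mem j).2.1
  have hwA : ∀ j, w j ∈ A := fun j => hG.mem_of_mem_adj' hvB (hw_mem j).1.2.symm
  exact hfree <| containsCopy_Bgraph huv (fun j => (hx_mem j).2.1) (fun j => (hw_mem j).1.2)
    (fun j => (hx_mem j).2.2.symm) hx hw (fun j => (hx_mem j).1) (fun j => (hw_mem j).1.1)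
    fun i j h => Finset.disjoint_left.mp (disjoint_coe.mp hG.disjoint) (h ▸ hwA j) (hxB i)

theorem sum_codegree_le (hG : G.IsBipartiteWith A B) (hfree : ¬ ContainsCopy (Bgraph t) G)
    {u : V} (hu : u ∈ A) : ∑ u' ∈ A, G.codegree_s5 u u' ≤ t * G.degree u + t * #A := by
  set H := {u' ∈ A.erase u | t < G.codegree_s5 u u'}
  have hsplit : ∑ u' ∈ A, G.codegree_s5 u u' = G.degree u + ∑ u' ∈ H, G.codegree_s5 u u' +
      ∑ u' ∈ A.erase u with ¬ t < G.codegree_s5 u u', G.codegree_s5 u u' := by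
    rw [← add_sum_erase _ _ hu,
      ← sum_filter_add_sum_filter_not (A.erase u) (t < G.codegree_s5 u ·), ← add_assoc,
      codegree_self]
  have hlight : ∑ u' ∈ A.erase u with ¬ t < G.codegree_s5 u u', G.codegree_s5 u u' ≤ t * #A :=
    calc _ ≤ #{u' ∈ A.erase u | ¬ t < G.codegree_s5 u u'} * t :=
          sum_le_card_nsmul _ _ _ fun u' hu' => not_lt.mp (mem_filter.mp hu').2
      _ ≤ t * #A := by
          rw [mul_comm]
          exact Nat.mul_le_mul_left _ ((card_filter_le _ _).trans card_erase_le)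
  -- Count the paths `u v u'` with `u' ∈ H` by their middle vertex `v`, which has fewer than `t`
  -- neighbours in `H`.
  have hheavy : G.degree u + ∑ u' ∈ H, G.codegree_s5 u u' ≤ t * G.degree u := by
    have hswap :
        ∑ u' ∈ H, G.codegree_s5 u u' = ∑ v ∈ G.neighborFinset u, #{u' ∈ H | G.Adj u' v} := by
      refine (sum_congr rfl fun u' _ => ?_).trans
        (sum_card_bipartiteAbove_eq_sum_card_bipartiteBelow G.Adj)
      simp only [codegree_s5, bipartiteAbove, ← mem_neighborFinset, filter_mem_eq_inter]
    have hv : ∀ v ∈ G.neighborFinset u, #{u' ∈ H | G.Adj u' v} + 1 ≤ t := fun v hv => by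
      refine Nat.succ_le_of_lt ((card_le_card fun u' hu' => ?_).trans_lt
        (card_filter_lt_codegree_lt hG hfree hu ((mem_neighborFinset ..).mp hv)))
      simp only [H, mem_filter, mem_erase, mem_neighborFinset] at hu' ⊢
      exact ⟨⟨hu'.1.1.1, hu'.2.symm⟩, hu'.1.2⟩
    calc G.degree u + ∑ u' ∈ H, G.codegree_s5 u u'
        = ∑ v ∈ G.neighborFinset u, (#{u' ∈ H | G.Adj u' v} + 1) := by
          rw [hswap, sum_add_distrib, ← card_neighborFinset_eq_degree, card_eq_sum_ones, add_comm]
      _ ≤ ∑ v ∈ G.neighborFinset u, t := sum_le_sum hv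
      _ = t * G.degree u := by simp [mul_comm]
  omega

theorem sum_sq_degree_le (hG : G.IsBipartiteWith A B) (hfree : ¬ ContainsCopy (Bgraph t) G) :
    ∑ v ∈ B, G.degree v ^ 2 ≤ t * #A ^ 2 + t * #G.edgeFinset :=
  calc ∑ v ∈ B, G.degree v ^ 2 = ∑ u ∈ A, ∑ u' ∈ A, G.codegree_s5 u u' :=
        sum_sq_degree_eq_sum_sum_codegree hG
    _ ≤ ∑ u ∈ A, (t * G.degree u + t * #A) :=
        sum_le_sum fun u hu => sum_codegree_le hG hfree hu
    _ = t * #A ^ 2 + t * #G.edgeFinset := by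
        rw [sum_add_distrib, ← mul_sum, isBipartiteWith_sum_degrees_eq_card_edges hG, sum_const,
          smul_eq_mul]
        ring

theorem sq_card_edgeFinset_le (hG : G.IsBipartiteWith A B)
    (hfree : ¬ ContainsCopy (Bgraph t) G) :
    #G.edgeFinset ^ 2 ≤ #B * (t * #A ^ 2 + t * #G.edgeFinset) :=
  calc #G.edgeFinset ^ 2 = (∑ v ∈ B, G.degree v) ^ 2 := by
        rw [isBipartiteWith_sum_degrees_eq_card_edges' hG]
    _ ≤ #B * ∑ v ∈ B, G.degree v ^ 2 := sq_sum_le_card_mul_sum_sq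
    _ ≤ #B * (t * #A ^ 2 + t * #G.edgeFinset) :=
        Nat.mul_le_mul_left _ (sum_sq_degree_le hG hfree)

theorem eight_mul_sq_card_edgeFinset_le (hG : G.IsBipartite)
    (hfree : ¬ ContainsCopy (Bgraph t) G) :
    8 * #G.edgeFinset ^ 2 ≤
      t * Fintype.card V ^ 3 + 4 * t * Fintype.card V * #G.edgeFinset := by
  classical
  obtain ⟨s, s', hss⟩ := hG.exists_isBipartiteWith
  have hAB : G.IsBipartiteWith ↑s.toFinset ↑s'.toFinset := by simpa using hss
  set A := s.toFinset
  set B := s'.toFinset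
  have hcsB := sq_card_edgeFinset_le hAB hfree
  have hcsA := sq_card_edgeFinset_le hAB.symm hfree
  have hcard : #A + #B ≤ Fintype.card V := by
    rw [← card_union_of_disjoint (disjoint_coe.mp hAB.disjoint)]
    exact card_le_univ _
  have hamgm : 4 * #A * #B ≤ Fintype.card V ^ 2 :=
    (four_mul_le_sq_add _ _).trans (Nat.pow_le_pow_left hcard 2)
  calc 8 * #G.edgeFinset ^ 2
      ≤ 4 * (#B * (t * #A ^ 2 + t * #G.edgeFinset) + #A * (t * #B ^ 2 + t * #G.edgeFinset)) := by
        linarith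
    _ = t * (4 * #A * #B) * (#A + #B) + 4 * t * (#A + #B) * #G.edgeFinset := by ring
    _ ≤ t * Fintype.card V ^ 2 * Fintype.card V + 4 * t * Fintype.card V * #G.edgeFinset := by
        gcongr
    _ = t * Fintype.card V ^ 3 + 4 * t * Fintype.card V * #G.edgeFinset := by ring

end Bipartite

end SimpleGraph

theorem le_add_of_sq_le_sq_add_mul {R : Type*} [CommRing R] [LinearOrder R]
    [IsStrictOrderedRing R]
    {x b c : R} (hb : 0 ≤ b) (hc : 0 ≤ c) (h : x ^ 2 ≤ c ^ 2 + b * x) : x ≤ b + c := by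
  nlinarith

theorem ex_bip_Bt_upper_general (t : ℕ) (ε : ℝ) (hε : 0 < ε) :
    ∃ N : ℕ, ∀ n : ℕ, N ≤ n → ∀ G : SimpleGraph (Fin n), G.Colorable 2 →
      ¬ ContainsCopy (Bgraph t) G →
      (G.edgeSet.ncard : ℝ)
        ≤ (Real.sqrt t / (2 * Real.sqrt 2) + ε) * (n : ℝ) ^ (3/2 : ℝ) := by
  refine ⟨⌈(t / (2 * ε)) ^ 2⌉₊, fun n hn G hG hfree => ?_⟩
  classical
  have hcount : 8 * (#G.edgeFinset : ℝ) ^ 2 ≤ t * n ^ 3 + 4 * t * n * #G.edgeFinset := by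
    exact_mod_cast Fintype.card_fin n ▸ G.eight_mul_sq_card_edgeFinset_le hG hfree
  set s := (n : ℝ) ^ (3/2 : ℝ)
  have hs : s ^ 2 = n ^ 3 := by
    rw [← Real.rpow_natCast, ← Real.rpow_mul (Nat.cast_nonneg n)]
    norm_num
  have hκ : (Real.sqrt t / (2 * Real.sqrt 2)) ^ 2 = t / 8 := by
    rw [div_pow, mul_pow, Real.sq_sqrt (Nat.cast_nonneg t), Real.sq_sqrt zero_le_two]
    ring
  have hlin : t * n / 2 ≤ ε * s := by
    have hn' : t ^ 2 ≤ 4 * ε ^ 2 * n := by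
      have := Nat.ceil_le.mp hn
      rw [div_pow, mul_pow, div_le_iff₀ (by positivity)] at this
      linarith
    refine le_of_pow_le_pow_left₀ two_ne_zero (by positivity) ?_
    rw [mul_pow, hs]
    nlinarith [mul_le_mul_of_nonneg_right hn' (sq_nonneg (n : ℝ))]
  rw [← coe_edgeFinset, Set.ncard_coe_finset]
  calc (#G.edgeFinset : ℝ) ≤ t * n / 2 + Real.sqrt t / (2 * Real.sqrt 2) * s :=
        le_add_of_sq_le_sq_add_mul (by positivity) (by positivity)
          (by rw [mul_pow, hκ, hs]; linarith)
    _ ≤ (Real.sqrt t / (2 * Real.sqrt 2) + ε) * s := by linarith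

theorem ex_bip_Bt_upper (t : ℕ) (ht : 1 ≤ t) (ε : ℝ) (hε : 0 < ε) :
    ∃ N : ℕ, ∀ n : ℕ, N ≤ n → ∀ G : SimpleGraph (Fin n), G.Colorable 2 →
      ¬ ContainsCopy (Bgraph t) G →
      (G.edgeSet.ncard : ℝ)
        ≤ (Real.sqrt t / (2 * Real.sqrt 2) + ε) * (n : ℝ) ^ (3/2 : ℝ) :=
  ex_bip_Bt_upper_general t ε hε
end

section
/- For every ε > 0 there exists N such that for all n ≥ N, every bipartite graph G on n vertices that contains no subgraph isomorphic to B_2 satisfies e(G) ≤ (0.468 + ε)·n^{3/2}. (That is, ex_bip(n, B_2) ≤ 0.468·(1+o(1))·n^{3/2}.) -/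
open SimpleGraph

/-! Let `s ∪ t` be a bipartition of `G`, `e = e(G)`, and call two vertices `u ≠ x` a *heavy pair*
if they have at least three common neighbours; `k u` counts the neighbours of `u` that are common
neighbours of some heavy pair through `u`. A copy of `B₂` is a pair of `4`-cycles through one edge,
so in a `B₂`-free bipartite graph

* two distinct common neighbours of a heavy pair have exactly that pair as common neighbourhood;
* a pair `y y'` with at least two common neighbours but not inside the common neighbourhood of a
  heavy pair is determined by `y` and any common neighbour `u` of `y, y'`;
* no edge `u y` is counted both in `k u` and in `k y`, so `∑ k ≤ e` over all vertices.

Double counting the pairs of neighbours of the vertices of `s` through the codegrees of pairs in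
`t` gives `∑ₛ d (d - 1) ≤ |t|² + ∑ₛ d + ½ ∑ₛ k (k - 1)`, and Cauchy–Schwarz turns this into
`e² + (e - ∑ₛ k)² ≤ |s| (2 |t|² + 4 e)`. Adding the inequalities of the two sides yields
`e² ≤ n³ / 5 + 2 n e`, that is `e ≤ (1 / √5 + o(1)) n ^ (3 / 2)`, and `1 / √5 < 0.468`. -/

open Finset

namespace Finset

lemma natCast_card_offDiag {R α : Type*} [CommRing R] [DecidableEq α] (s : Finset α) :
    (#s.offDiag : R) = #s ^ 2 - #s := by
  rw [offDiag_card, Nat.cast_sub (Nat.le_mul_self _)]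
  push_cast
  ring

lemma exists_mem_ne_ne {α : Type*} [DecidableEq α] {s : Finset α} (hs : 2 < #s)
    (a b : α) : ∃ c ∈ s, c ≠ a ∧ c ≠ b := by
  by_contra! h
  have hsub : s ⊆ {a, b} := fun c hc => by
    by_cases hca : c = a
    · simp [hca]
    · simp [h c hc hca]
  have := (card_le_card hsub).trans (card_insert_le a {b})
  simp at this
  omega

end Finset

lemma sq_le_cube_div_five_of_two_sides {a b n E K L : ℝ} (ha : 0 ≤ a) (hb : 0 ≤ b)
    (hab : a + b ≤ n) (hK : 0 ≤ K) (hL : 0 ≤ L) (hKL : K + L ≤ E)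
    (h₁ : E ^ 2 + (E - K) ^ 2 ≤ a * (2 * b ^ 2 + 4 * E))
    (h₂ : E ^ 2 + (E - L) ^ 2 ≤ b * (2 * a ^ 2 + 4 * E)) :
    E ^ 2 ≤ n ^ 3 / 5 + 2 * n * E := by
  have hE : 0 ≤ E := by linarith
  have hsq : E ^ 2 / 2 ≤ (E - K) ^ 2 + (E - L) ^ 2 := by
    nlinarith [sq_nonneg (K - L)]
  have hn : 0 ≤ a + b := by linarith
  have hab₂ : a * b ≤ n ^ 2 / 4 := by
    nlinarith [sq_nonneg (a - b), mul_le_mul hab hab hn (hn.trans hab)]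
  have hab' : a * b * (a + b) ≤ n ^ 3 / 4 := by
    nlinarith [mul_le_mul hab₂ hab hn (by positivity)]
  nlinarith [mul_le_mul_of_nonneg_right hab hE]

lemma le_mul_rpow_three_halves_of_sq_le {n E : ℝ} (hn : 10000 ≤ n) (hE : 0 ≤ E)
    (h : E ^ 2 ≤ n ^ 3 / 5 + 2 * n * E) : E ≤ 0.468 * n ^ (3 / 2 : ℝ) := by
  obtain ⟨r, hr, rfl⟩ : ∃ r : ℝ, 100 ≤ r ∧ r ^ 2 = n :=
    ⟨√n, Real.le_sqrt_of_sq_le (by linarith), Real.sq_sqrt (by linarith)⟩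
  have hr3 : (r ^ 2) ^ (3 / 2 : ℝ) = r ^ 3 := by
    rw [← Real.rpow_natCast r 2, ← Real.rpow_mul (by linarith)]
    norm_num
  rw [hr3]
  by_contra! hlt
  -- `E² - 2 r² E - r⁶ / 5` is increasing for `E ≥ r²` and already positive at `E = 0.468 r³`
  nlinarith [mul_pos (sub_pos.2 hlt) (show 0 < E + 0.468 * r ^ 3 - 2 * r ^ 2 by nlinarith),
    pow_pos (show (0:ℝ) < r by linarith) 5]

namespace SimpleGraph

variable {V : Type*} {G : SimpleGraph V}

lemma CliqueFree.not_adj_of_adj_of_adj (h3 : G.CliqueFree 3) {a b c : V}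
    (hab : G.Adj a b) (hbc : G.Adj b c) : ¬ G.Adj a c := by
  classical
  exact fun hac => h3 {a, b, c} (is3Clique_triple_iff.2 ⟨hab, hac, hbc⟩)

lemma eq_of_not_containsCopy_bgraph_two (hB : ¬ ContainsCopy (Bgraph 2) G)
    (h3 : G.CliqueFree 3) {u y₁ y₂ y₃ x₂ x₃ : V}
    (huy₁ : G.Adj u y₁) (huy₂ : G.Adj u y₂) (huy₃ : G.Adj u y₃)
    (hx₂y₁ : G.Adj x₂ y₁) (hx₂y₂ : G.Adj x₂ y₂) (hx₃y₁ : G.Adj x₃ y₁) (hx₃y₃ : G.Adj x₃ y₃)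
    (hx₂ : x₂ ≠ u) (hx₃ : x₃ ≠ u) (hy₁₂ : y₁ ≠ y₂) (hy₁₃ : y₁ ≠ y₃) (hy₂₃ : y₂ ≠ y₃) :
    x₂ = x₃ := by
  by_contra hx₂₃
  have hx₂y₃ : x₂ ≠ y₃ := by
    rintro rfl
    exact h3.not_adj_of_adj_of_adj huy₃ hx₂y₁ huy₁
  have hx₃y₂ : x₃ ≠ y₂ := by
    rintro rfl
    exact h3.not_adj_of_adj_of_adj huy₂ hx₃y₁ huy₁
  -- the two 4-cycles `u y₂ x₂ y₁` and `u y₃ x₃ y₁` share the edge `u y₁`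
  let f : Fin 2 × (Fin 1 ⊕ Fin 2) → V
    | (k, .inl _) => ![u, y₁] k
    | (k, .inr l) => ![![y₂, y₃], ![x₂, x₃]] k l
  refine hB ⟨f, fun a b hab => ?_, fun a b hab => ?_⟩
  · have := G.ne_of_adj huy₁
    have := G.ne_of_adj huy₂
    have := G.ne_of_adj huy₃
    have := G.ne_of_adj hx₂y₁
    have := G.ne_of_adj hx₂y₂
    have := G.ne_of_adj hx₃y₁
    have := G.ne_of_adj hx₃y₃
    rcases a with ⟨k, _ | l⟩ <;> rcases b with ⟨k', _ | l'⟩ <;>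
      fin_cases k <;> fin_cases k' <;> (try fin_cases l) <;> (try fin_cases l') <;>
      simp_all [f, eq_comm, Fin.fin_one_eq_zero]
  · rw [Bgraph, boxProd_adj] at hab
    rcases a with ⟨k, _ | l⟩ <;> rcases b with ⟨k', _ | l'⟩ <;>
      fin_cases k <;> fin_cases k' <;> (try fin_cases l) <;> (try fin_cases l') <;>
      simp_all [f, G.adj_comm]

section Finite

variable [Fintype V] [DecidableRel G.Adj]

variable (G) in
def commonNeighborFinset (v w : V) : Finset V := {z | G.Adj v z ∧ G.Adj w z}

@[simp]
lemma mem_commonNeighborFinset {v w z : V} :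
    z ∈ G.commonNeighborFinset v w ↔ G.Adj v z ∧ G.Adj w z := by
  simp [commonNeighborFinset]

lemma commonNeighborFinset_comm (v w : V) :
    G.commonNeighborFinset v w = G.commonNeighborFinset w v := by
  ext; simp [and_comm]

lemma commonNeighborFinset_subset {s t : Finset V} (hst : G.IsBipartiteWith s t) {y : V}
    (hy : y ∈ t) (y' : V) : G.commonNeighborFinset y y' ⊆ s := fun _ hz =>
  mem_coe.1 (hst.mem_of_mem_adj' (mem_coe.2 hy) (mem_commonNeighborFinset.1 hz).1.symm)

variable (G) in
def IsHeavyPair (u x : V) : Prop := u ≠ x ∧ 3 ≤ #(G.commonNeighborFinset u x)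

lemma IsHeavyPair.symm {u x : V} (h : G.IsHeavyPair u x) : G.IsHeavyPair x u :=
  ⟨h.1.symm, G.commonNeighborFinset_comm u x ▸ h.2⟩

variable [DecidableEq V]

instance : DecidableRel G.IsHeavyPair := fun _ _ => inferInstanceAs (Decidable (_ ∧ _))

variable (G) in
def heavyNeighborFinset (u : V) : Finset V :=
  {y | ∃ x, G.IsHeavyPair u x ∧ y ∈ G.commonNeighborFinset u x}

lemma mem_heavyNeighborFinset {u y : V} :
    y ∈ G.heavyNeighborFinset u ↔ ∃ x, G.IsHeavyPair u x ∧ y ∈ G.commonNeighborFinset u x := by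
  simp [heavyNeighborFinset]

lemma heavyNeighborFinset_subset_neighborFinset (u : V) :
    G.heavyNeighborFinset u ⊆ G.neighborFinset u := fun y hy => by
  obtain ⟨_, -, hy⟩ := mem_heavyNeighborFinset.1 hy
  exact (mem_neighborFinset _ _ _).2 (mem_commonNeighborFinset.1 hy).1

variable (G) in
def IsCoveredPair (y y' : V) : Prop :=
  ∃ u x, G.IsHeavyPair u x ∧ y ∈ G.commonNeighborFinset u x ∧ y' ∈ G.commonNeighborFinset u x

instance : DecidableRel G.IsCoveredPair := fun _ _ => by unfold IsCoveredPair; infer_instance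

lemma commonNeighborFinset_eq_of_isHeavyPair (hB : ¬ ContainsCopy (Bgraph 2) G)
    (h3 : G.CliqueFree 3) {u x y y' : V} (hux : G.IsHeavyPair u x)
    (hy : y ∈ G.commonNeighborFinset u x) (hy' : y' ∈ G.commonNeighborFinset u x)
    (hyy' : y ≠ y') : G.commonNeighborFinset y y' = {u, x} := by
  rw [mem_commonNeighborFinset] at hy hy'
  ext w
  simp only [mem_commonNeighborFinset, mem_insert, mem_singleton]
  refine ⟨fun ⟨hyw, hy'w⟩ => ?_, ?_⟩
  · by_contra! hw
    obtain ⟨y'', hy'', hy''y, hy''y'⟩ := exists_mem_ne_ne hux.2 y y'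
    rw [mem_commonNeighborFinset] at hy''
    exact hw.2 (eq_of_not_containsCopy_bgraph_two hB h3 hy.1 hy''.1 hy'.1 hy.2 hy''.2
      hyw.symm hy'w.symm hux.1.symm hw.1 hy''y.symm hyy' hy''y').symm
  · rintro (rfl | rfl)
    exacts [⟨hy.1.symm, hy'.1.symm⟩, ⟨hy.2.symm, hy'.2.symm⟩]

lemma isCoveredPair_of_two_le_card (hB : ¬ ContainsCopy (Bgraph 2) G) (h3 : G.CliqueFree 3)
    {u y y₂ y₃ : V} (h₂ : 2 ≤ #(G.commonNeighborFinset y y₂))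
    (h₃ : 2 ≤ #(G.commonNeighborFinset y y₃)) (hu₂ : u ∈ G.commonNeighborFinset y y₂)
    (hu₃ : u ∈ G.commonNeighborFinset y y₃) (hy₁₂ : y ≠ y₂) (hy₁₃ : y ≠ y₃) (hy₂₃ : y₂ ≠ y₃) :
    G.IsCoveredPair y y₂ := by
  obtain ⟨x₂, hx₂, hx₂u⟩ := exists_mem_ne h₂ u
  obtain ⟨x₃, hx₃, hx₃u⟩ := exists_mem_ne h₃ u
  rw [mem_commonNeighborFinset] at hu₂ hu₃ hx₂ hx₃
  obtain rfl : x₂ = x₃ := eq_of_not_containsCopy_bgraph_two hB h3 hu₂.1.symm hu₂.2.symm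
    hu₃.2.symm hx₂.1.symm hx₂.2.symm hx₃.1.symm hx₃.2.symm hx₂u hx₃u hy₁₂ hy₁₃ hy₂₃
  have hsub : {y, y₂, y₃} ⊆ G.commonNeighborFinset u x₂ := by
    intro z hz
    simp only [mem_insert, mem_singleton] at hz
    rcases hz with rfl | rfl | rfl <;> rw [mem_commonNeighborFinset]
    exacts [⟨hu₂.1.symm, hx₂.1.symm⟩, ⟨hu₂.2.symm, hx₂.2.symm⟩, ⟨hu₃.2.symm, hx₃.2.symm⟩]
  have hcard : #({y, y₂, y₃} : Finset V) = 3 := by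
    rw [card_insert_of_notMem (by simp [hy₁₂, hy₁₃]), card_pair hy₂₃]
  exact ⟨u, x₂, ⟨hx₂u.symm, hcard ▸ card_le_card hsub⟩, hsub (by simp), hsub (by simp)⟩

lemma notMem_heavyNeighborFinset (hB : ¬ ContainsCopy (Bgraph 2) G) (h3 : G.CliqueFree 3)
    {u y : V} (hy : y ∈ G.heavyNeighborFinset u) : u ∉ G.heavyNeighborFinset y := by
  simp only [mem_heavyNeighborFinset, mem_commonNeighborFinset] at hy ⊢
  rintro ⟨y', hyy', huy, huy'⟩
  obtain ⟨x, hux, hyu, hyx⟩ := hy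
  obtain ⟨y₂, hy₂, hy₂y, hy₂y'⟩ := exists_mem_ne_ne hux.2 y y'
  obtain ⟨u₂, hu₂, hu₂u, hu₂x⟩ := exists_mem_ne_ne hyy'.2 u x
  rw [mem_commonNeighborFinset] at hy₂ hu₂
  exact hu₂x (eq_of_not_containsCopy_bgraph_two hB h3 hyu hy₂.1 huy'.symm hyx hy₂.2
    hu₂.1.symm hu₂.2.symm hux.1.symm hu₂u hy₂y.symm hyy'.1 hy₂y').symm

lemma card_commonNeighborFinset_eq_two (hB : ¬ ContainsCopy (Bgraph 2) G) (h3 : G.CliqueFree 3)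
    {y y' : V} (hyy' : y ≠ y') (hcov : G.IsCoveredPair y y') :
    #(G.commonNeighborFinset y y') = 2 := by
  obtain ⟨u, x, hux, hy, hy'⟩ := hcov
  rw [commonNeighborFinset_eq_of_isHeavyPair hB h3 hux hy hy' hyy', card_pair hux.1]

lemma card_not_isCoveredPair_le_degree (hB : ¬ ContainsCopy (Bgraph 2) G) (h3 : G.CliqueFree 3)
    (u : V) : #{P : V × V | P.1 ≠ P.2 ∧ ¬ G.IsCoveredPair P.1 P.2 ∧
      2 ≤ #(G.commonNeighborFinset P.1 P.2) ∧ u ∈ G.commonNeighborFinset P.1 P.2} ≤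
      G.degree u := by
  rw [← card_neighborFinset_eq_degree]
  refine card_le_card_of_injOn Prod.fst (fun P hP => ?_) ?_
  · simp only [coe_filter, mem_univ, true_and, Set.mem_ofPred_eq, mem_commonNeighborFinset] at hP
    simpa using hP.2.2.2.1.symm
  · rintro ⟨y, y₂⟩ hP ⟨y', y₃⟩ hP' (rfl : y = y')
    simp only [coe_filter, mem_univ, true_and, Set.mem_ofPred_eq] at hP hP'
    by_contra hne
    exact hP.2.1 (isCoveredPair_of_two_le_card hB h3 hP.2.2.1 hP'.2.2.1 hP.2.2.2 hP'.2.2.2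
      hP.1 hP'.1 (by simpa using hne))

lemma filter_isCoveredPair_subset_offDiag_heavyNeighborFinset (hB : ¬ ContainsCopy (Bgraph 2) G)
    (h3 : G.CliqueFree 3) (w : V) :
    ({P : V × V | P.1 ≠ P.2 ∧ G.IsCoveredPair P.1 P.2 ∧ w ∈ G.commonNeighborFinset P.1 P.2} :
      Finset (V × V)) ⊆ (G.heavyNeighborFinset w).offDiag := by
  rintro ⟨y, y'⟩ hP
  simp only [mem_filter, mem_univ, true_and] at hP
  obtain ⟨hyy', ⟨u, x, hux, hy, hy'⟩, hw⟩ := hP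
  rw [commonNeighborFinset_eq_of_isHeavyPair hB h3 hux hy hy' hyy', mem_insert,
    mem_singleton] at hw
  rw [mem_offDiag, mem_heavyNeighborFinset, mem_heavyNeighborFinset]
  rcases hw with rfl | rfl
  · exact ⟨⟨x, hux, hy⟩, ⟨x, hux, hy'⟩, hyy'⟩
  · rw [commonNeighborFinset_comm] at hy hy'
    exact ⟨⟨u, hux.symm, hy⟩, ⟨u, hux.symm, hy'⟩, hyy'⟩

section Bipartite

variable {s t : Finset V}

lemma sum_card_commonNeighborFinset (hst : G.IsBipartiteWith s t) (X : Finset (V × V))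
    (hX : ∀ P ∈ X, P.1 ∈ t) :
    ∑ P ∈ X, #(G.commonNeighborFinset P.1 P.2) =
      ∑ u ∈ s, #{P ∈ X | u ∈ G.commonNeighborFinset P.1 P.2} := by
  refine Eq.trans ?_ (sum_card_bipartiteAbove_eq_sum_card_bipartiteBelow
    (fun u (P : V × V) => u ∈ G.commonNeighborFinset P.1 P.2)).symm
  refine sum_congr rfl fun P hP => ?_
  rw [bipartiteBelow, filter_mem_eq_inter,
    inter_eq_right.2 (commonNeighborFinset_subset hst (hX P hP) P.2)]

lemma filter_offDiag_mem_commonNeighborFinset (hst : G.IsBipartiteWith s t) {u : V}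
    (hu : u ∈ s) :
    {P ∈ t.offDiag | u ∈ G.commonNeighborFinset P.1 P.2} = (G.neighborFinset u).offDiag := by
  ext ⟨y, y'⟩
  simp only [mem_filter, mem_offDiag, mem_commonNeighborFinset, mem_neighborFinset]
  have hmem : ∀ {z}, G.Adj u z → z ∈ t := fun h =>
    mem_coe.1 (hst.mem_of_mem_adj (mem_coe.2 hu) h)
  constructor
  · rintro ⟨⟨-, -, hyy'⟩, hy, hy'⟩
    exact ⟨hy.symm, hy'.symm, hyy'⟩
  · rintro ⟨hy, hy', hyy'⟩
    exact ⟨⟨hmem hy, hmem hy', hyy'⟩, hy.symm, hy'.symm⟩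

lemma two_mul_sum_card_offDiag_neighborFinset_le (hB : ¬ ContainsCopy (Bgraph 2) G)
    (h3 : G.CliqueFree 3) (hst : G.IsBipartiteWith s t) :
    2 * ∑ u ∈ s, #(G.neighborFinset u).offDiag ≤
      2 * #t.offDiag + 2 * ∑ u ∈ s, G.degree u +
        ∑ u ∈ s, #(G.heavyNeighborFinset u).offDiag := by
  set c : V × V → ℕ := fun P => #(G.commonNeighborFinset P.1 P.2)
  set cov : V × V → Prop := fun P => G.IsCoveredPair P.1 P.2
  have hcount : ∀ X ⊆ t.offDiag,
      ∑ P ∈ X, c P = ∑ u ∈ s, #{P ∈ X | u ∈ G.commonNeighborFinset P.1 P.2} :=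
    fun X hX => sum_card_commonNeighborFinset hst X fun P hP => (mem_offDiag.1 (hX hP)).1
  have hpair : ∀ P ∈ t.offDiag, 2 * c P ≤
      2 + 2 * (if ¬ cov P ∧ 2 ≤ c P then c P else 0) + (if cov P then c P else 0) := by
    intro P hP
    -- pairs of codegree at most `1` are paid for by the `2`; a covered pair has codegree `2`,
    -- half of which the `2` pays as well
    by_cases hcov : cov P
    · simp [hcov, c, card_commonNeighborFinset_eq_two hB h3 (mem_offDiag.1 hP).2.2 hcov]
    · simp only [hcov, not_false_eq_true, true_and, if_false, add_zero]
      split_ifs <;> omega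
  calc 2 * ∑ u ∈ s, #(G.neighborFinset u).offDiag
      = ∑ P ∈ t.offDiag, 2 * c P := by
        rw [← mul_sum, hcount _ subset_rfl]
        exact congrArg _ (sum_congr rfl fun u hu =>
          congrArg card (filter_offDiag_mem_commonNeighborFinset hst hu).symm)
    _ ≤ ∑ P ∈ t.offDiag,
          (2 + 2 * (if ¬ cov P ∧ 2 ≤ c P then c P else 0) + (if cov P then c P else 0)) :=
        sum_le_sum hpair
    _ = 2 * #t.offDiag + 2 * ∑ P ∈ t.offDiag with ¬ cov P ∧ 2 ≤ c P, c P +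
          ∑ P ∈ t.offDiag with cov P, c P := by
        rw [sum_add_distrib, sum_add_distrib, ← mul_sum, sum_filter, sum_filter]
        simp [mul_comm]
    _ ≤ _ := by
        rw [hcount _ (filter_subset _ _), hcount _ (filter_subset _ _)]
        gcongr with u hu u hu
        · refine (card_le_card fun P hP => ?_).trans (card_not_isCoveredPair_le_degree hB h3 u)
          simp only [mem_filter, mem_offDiag, mem_univ, true_and] at hP ⊢
          exact ⟨hP.1.1.2.2, hP.1.2.1, hP.1.2.2, hP.2⟩
        · refine subset_trans (fun P hP => ?_)
            (filter_isCoveredPair_subset_offDiag_heavyNeighborFinset hB h3 u)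
          simp only [mem_filter, mem_offDiag, mem_univ, true_and] at hP ⊢
          exact ⟨hP.1.1.2.2, hP.1.2, hP.2⟩

lemma sq_card_edgeFinset_add_sq_sub_le (hB : ¬ ContainsCopy (Bgraph 2) G)
    (h3 : G.CliqueFree 3) (hst : G.IsBipartiteWith s t) :
    (#G.edgeFinset : ℝ) ^ 2 + (#G.edgeFinset - ∑ u ∈ s, (#(G.heavyNeighborFinset u) : ℝ)) ^ 2 ≤
      #s * (2 * #t ^ 2 + 4 * #G.edgeFinset) := by
  have hE : (#G.edgeFinset : ℝ) = ∑ u ∈ s, (G.degree u : ℝ) := by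
    rw [← isBipartiteWith_sum_degrees_eq_card_edges hst]
    push_cast
    rfl
  have hcount := (Nat.cast_le (α := ℝ)).2 (two_mul_sum_card_offDiag_neighborFinset_le hB h3 hst)
  push_cast [natCast_card_offDiag, card_neighborFinset_eq_degree] at hcount
  set d : V → ℝ := fun u => G.degree u
  set k : V → ℝ := fun u => #(G.heavyNeighborFinset u)
  have hkd : ∀ u, k u ≤ d u := fun u => by
    simpa [k, d] using card_le_card (heavyNeighborFinset_subset_neighborFinset (G := G) u)
  have hpt : ∑ u ∈ s, (d u ^ 2 + (d u - k u) ^ 2) ≤ 2 * #t ^ 2 + 4 * ∑ u ∈ s, d u := by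
    calc ∑ u ∈ s, (d u ^ 2 + (d u - k u) ^ 2)
        ≤ ∑ u ∈ s, (2 * (d u ^ 2 - d u) - (k u ^ 2 - k u) + 2 * d u) :=
          sum_le_sum fun u _ => by nlinarith [hkd u, show 0 ≤ k u by positivity]
      _ = 2 * ∑ u ∈ s, (d u ^ 2 - d u) - ∑ u ∈ s, (k u ^ 2 - k u) + 2 * ∑ u ∈ s, d u := by
          rw [sum_add_distrib, sum_sub_distrib, mul_sum, mul_sum]
      _ ≤ _ := by nlinarith [hcount, show (0 : ℝ) ≤ #t by positivity]
  calc (#G.edgeFinset : ℝ) ^ 2 + (#G.edgeFinset - ∑ u ∈ s, k u) ^ 2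
      ≤ #s * ∑ u ∈ s, d u ^ 2 + #s * ∑ u ∈ s, (d u - k u) ^ 2 := by
        rw [hE, ← sum_sub_distrib]
        gcongr <;> exact sq_sum_le_card_mul_sum_sq
    _ = #s * ∑ u ∈ s, (d u ^ 2 + (d u - k u) ^ 2) := by rw [sum_add_distrib, mul_add]
    _ ≤ _ := by rw [hE]; gcongr

end Bipartite

lemma sum_card_heavyNeighborFinset_le (hB : ¬ ContainsCopy (Bgraph 2) G) (h3 : G.CliqueFree 3) :
    ∑ v, #(G.heavyNeighborFinset v) ≤ #G.edgeFinset := by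
  rw [← card_sigma]
  refine card_le_card_of_injOn (fun x => s(x.1, x.2)) (fun x hx => ?_) ?_
  · have := heavyNeighborFinset_subset_neighborFinset _ (mem_sigma.1 hx).2
    simpa using this
  · rintro ⟨v, w⟩ hx ⟨v', w'⟩ hx' h
    simp only [mem_coe, mem_sigma, mem_univ, true_and] at hx hx'
    rcases Sym2.eq_iff.1 h with ⟨rfl, rfl⟩ | ⟨rfl, rfl⟩
    · rfl
    · exact absurd hx' (notMem_heavyNeighborFinset hB h3 hx)

end Finite

theorem card_edgeFinset_sq_le [Fintype V] [DecidableRel G.Adj]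
    (hB : ¬ ContainsCopy (Bgraph 2) G) (hG : G.IsBipartite) :
    (#G.edgeFinset : ℝ) ^ 2 ≤ Fintype.card V ^ 3 / 5 + 2 * Fintype.card V * #G.edgeFinset := by
  classical
  obtain ⟨s, t, hst⟩ := hG.exists_isBipartiteWith
  rw [← s.coe_toFinset, ← t.coe_toFinset] at hst
  have h3 : G.CliqueFree 3 := hG.cliqueFree (by norm_num)
  have hs := sq_card_edgeFinset_add_sq_sub_le hB h3 hst
  have ht := sq_card_edgeFinset_add_sq_sub_le hB h3 hst.symm
  have hKL : ∑ u ∈ s.toFinset, (#(G.heavyNeighborFinset u) : ℝ) +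
      ∑ u ∈ t.toFinset, (#(G.heavyNeighborFinset u) : ℝ) ≤ #G.edgeFinset := by
    have hdisj : Disjoint s.toFinset t.toFinset := by simpa using hst.disjoint
    rw [← sum_union hdisj]
    exact_mod_cast (sum_le_univ_sum_of_nonneg fun _ => Nat.zero_le _).trans
      (sum_card_heavyNeighborFinset_le hB h3)
  have hcard : (#s.toFinset : ℝ) + #t.toFinset ≤ Fintype.card V := by
    exact_mod_cast (card_union_of_disjoint (by simpa using hst.disjoint)).symm.trans_le
      (card_le_univ _)
  exact sq_le_cube_div_five_of_two_sides (by positivity) (by positivity) hcard (by positivity)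
    (by positivity) hKL hs ht

end SimpleGraph

theorem ex_bip_B2_upper (ε : ℝ) (hε : 0 < ε) :
    ∃ N : ℕ, ∀ n : ℕ, N ≤ n → ∀ G : SimpleGraph (Fin n), G.Colorable 2 →
      ¬ ContainsCopy (Bgraph 2) G →
      (G.edgeSet.ncard : ℝ) ≤ (0.468 + ε) * (n : ℝ) ^ (3/2 : ℝ) := by
  classical
  refine ⟨10000, fun n hn G hG hB => ?_⟩
  have hE := card_edgeFinset_sq_le hB hG
  rw [Fintype.card_fin] at hE
  rw [← coe_edgeFinset, Set.ncard_coe_finset]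
  calc (#G.edgeFinset : ℝ) ≤ 0.468 * (n : ℝ) ^ (3/2 : ℝ) :=
        le_mul_rpow_three_halves_of_sq_le (by exact_mod_cast hn) (by positivity) hE
    _ ≤ (0.468 + ε) * (n : ℝ) ^ (3/2 : ℝ) := by gcongr; linarith
end

section
/- Let t be a positive integer and let G be a bipartite graph with parts V_1 and V_2 of sizes n_1 and n_2, containing no subgraph isomorphic to B_t. Then for {i, j} = {1, 2}, N_i(C_4, G) ≥ (1/2)·C(t,2)·( Σ_{u ∈ V_i} d(u)² − (2t−1)·e(G) − (t−1)·n_j² ), where C(t,2) is the binomial coefficient t choose 2. -/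
open SimpleGraph

/-- The codegree of a set `S`: the number of common neighbors of all vertices of `S`. -/
noncomputable def codeg {V : Type*} (G : SimpleGraph V) (S : Finset V) : ℕ :=
  {v : V | ∀ u ∈ S, G.Adj u v}.ncard

/-!
For `c ∈ V₂` and `u ∈ N(c)`, a matching of size `t` between `N(u) \ {c}` and `N(c) \ {u}` would
form a copy of `B_t` together with the edge `uc`, so by König's theorem these edges are covered by
sets `B u ⊆ N(u)`, `C u ⊆ N(c)` with `|B u| + |C u| < t`. Let `d ∈ V₂ \ {c}` and
`U = N(c) ∩ N(d)`. If `d ∉ B u` for some `u ∈ U`, then `U \ {u} ⊆ C u`; so `|U| ≤ t`, and if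
`|U| = t` then `U = {u} ∪ C u` and `B u = ∅`. Hence when `|U| ≥ t`, either `d ∈ B u` for all
`u ∈ U`, or `|U| = t` and `U` is good (so all its pairs count), or `|U| = t` and `d` is one of the
at most `t - 1` common neighbours of `{u} ∪ C u` other than `c`. Charging the excess
`|U| - t + 1` of `d` to the corresponding vertices `u` charges each `u ∈ N(c)` fewer than `t`
times. Summing over `d` and `c`, with `∑_c ∑_d |N(c) ∩ N(d)| = ∑_{u ∈ V₁} d(u)² - e(G)`, gives
`2 N₁(C₄, G) ≥ C(t, 2) (∑_{u ∈ V₁} d(u)² - t e(G) - (t - 1) n₂ (n₂ - 1))`.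
-/

open Finset Function

section Matching

variable {α β : Type*}

theorem Finset.exists_matching_of_injective_sum {r : α → β → Prop} {X : Finset α}
    {Y : Finset β} {k d : ℕ} (hX : #X = k + d) (f : X → β ⊕ Fin d) (hf : Injective f)
    (hfY : ∀ x y, f x = Sum.inl y → y ∈ Y ∧ r x y) :
    ∃ (x : Fin k → α) (y : Fin k → β), Injective x ∧ Injective y ∧
      ∀ j, x j ∈ X ∧ y j ∈ Y ∧ r (x j) (y j) := by
  classical
  have hright : #{x | (f x).isRight} ≤ d := by
    have := card_le_card_of_injOn f (s := {x | (f x).isRight}) (t := univ.map Embedding.inr)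
      (fun x hx => by
        obtain ⟨i, hi⟩ := Sum.isRight_iff.1 (mem_filter.1 hx).2
        simp [hi]) hf.injOn
    simpa using this
  have hleft : k ≤ #{x | (f x).isLeft} := by
    have := card_filter_add_card_filter_not (s := (univ : Finset X)) (fun x => (f x).isLeft)
    simp only [Bool.not_eq_true, Sum.isLeft_eq_false, card_univ, Fintype.card_coe] at this
    omega
  obtain ⟨e⟩ : Nonempty (Fin k ↪ {x : X // (f x).isLeft}) :=
    Function.Embedding.nonempty_of_card_le (by simpa [Fintype.card_subtype] using hleft)
  refine ⟨fun j => (e j).1, fun j => (f (e j)).getLeft (e j).2, ?_, ?_, fun j => ?_⟩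
  · exact fun i j hij => e.injective (Subtype.ext (Subtype.ext hij))
  · intro i j hij
    have := congrArg (Sum.inl : β → β ⊕ Fin d) hij
    simp only [Sum.inl_getLeft] at this
    exact e.injective (Subtype.ext (hf this))
  · exact ⟨(e j).1.2, hfY _ _ (Sum.inl_getLeft _ _).symm⟩

theorem Finset.exists_matching_of_forall_card_add_le (r : α → β → Prop) [DecidableRel r]
    [DecidableEq β] {X : Finset α} {Y : Finset β} {k : ℕ}
    (h : ∀ s ⊆ X, #s + k ≤ #X + #{y ∈ Y | ∃ x ∈ s, r x y}) :
    ∃ (x : Fin k → α) (y : Fin k → β), Injective x ∧ Injective y ∧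
      ∀ j, x j ∈ X ∧ y j ∈ Y ∧ r (x j) (y j) := by
  obtain ⟨d, hd⟩ : ∃ d, #X = k + d :=
    Nat.exists_eq_add_of_le (by simpa using h ∅ (empty_subset X))
  -- Hall's condition holds once `d` vertices adjacent to everything are added to `Y`.
  let nbhd : X → Finset (β ⊕ Fin d) := fun x => {y ∈ Y | r x y}.disjSum univ
  have hall : ∀ s : Finset X, #s ≤ #(s.biUnion nbhd) := by
    intro s
    obtain rfl | ⟨x₀, hx₀⟩ := s.eq_empty_or_nonempty
    · simp
    have hsub : {y ∈ Y | ∃ x ∈ s.map (Embedding.subtype _), r x y}.disjSum univ ⊆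
        s.biUnion nbhd := by
      rintro (y | i) hy
      · simp only [inl_mem_disjSum, mem_filter, mem_map, Embedding.coe_subtype] at hy
        obtain ⟨hy, _, ⟨x, hx, rfl⟩, hxy⟩ := hy
        exact mem_biUnion.2 ⟨x, hx, by simpa [nbhd] using ⟨hy, hxy⟩⟩
      · exact mem_biUnion.2 ⟨x₀, hx₀, by simp [nbhd]⟩
    have hs := h (s.map (Embedding.subtype _)) fun x hx => by
      obtain ⟨x, -, rfl⟩ := mem_map.1 hx
      exact x.2
    have := card_le_card hsub
    simp only [card_map, card_disjSum, card_univ, Fintype.card_fin] at hs this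
    omega
  obtain ⟨f, hf, hfmem⟩ := (all_card_le_biUnion_card_iff_exists_injective nbhd).1 hall
  exact exists_matching_of_injective_sum hd f hf fun x y hxy => by
    simpa [nbhd, hxy] using hfmem x

theorem Finset.exists_cover_of_not_exists_matching (r : α → β → Prop) {X : Finset α}
    {Y : Finset β} {k : ℕ}
    (h : ¬ ∃ (x : Fin k → α) (y : Fin k → β), Injective x ∧ Injective y ∧
      ∀ j, x j ∈ X ∧ y j ∈ Y ∧ r (x j) (y j)) :
    ∃ B ⊆ X, ∃ C ⊆ Y, #B + #C < k ∧ ∀ x ∈ X, ∀ y ∈ Y, r x y → x ∈ B ∨ y ∈ C := by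
  classical
  obtain ⟨s, hsX, hs⟩ : ∃ s ⊆ X, #X + #{y ∈ Y | ∃ x ∈ s, r x y} < #s + k := by
    by_contra! hall
    exact h (exists_matching_of_forall_card_add_le r hall)
  refine ⟨X \ s, sdiff_subset, {y ∈ Y | ∃ x ∈ s, r x y}, filter_subset _ _, ?_, ?_⟩
  · have := card_le_card hsX
    rw [card_sdiff_of_subset hsX]
    omega
  · intro x hx y hy hxy
    by_cases hxs : x ∈ s
    · exact Or.inr (mem_filter.2 ⟨hy, x, hxs, hxy⟩)
    · exact Or.inl (mem_sdiff.2 ⟨hx, hxs⟩)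

end Matching

namespace SimpleGraph

variable {V : Type*} {G : SimpleGraph V} {t : ℕ} {V₁ V₂ : Finset V}

theorem containsCopy_Bgraph_s10 {u c : V} {x y : Fin t → V} (huc : G.Adj u c)
    (hx : Injective x) (hy : Injective y) (hux : ∀ j, G.Adj u (x j)) (hcy : ∀ j, G.Adj c (y j))
    (hxy : ∀ j, G.Adj (x j) (y j)) (hxc : ∀ j, x j ≠ c) (hyu : ∀ j, y j ≠ u)
    (hxy' : ∀ i j, x i ≠ y j) : ContainsCopy (Bgraph t) G := by
  refine ⟨fun p => Sum.elim (fun _ => ![u, c] p.1) (fun j => ![x j, y j] p.1) p.2, ?_, ?_⟩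
  · rintro ⟨i, z | j⟩ ⟨i', z' | j'⟩ h <;> fin_cases i <;> fin_cases i' <;>
      simp_all [Fin.fin_one_eq_zero, hx.eq_iff, hy.eq_iff, huc.ne, (hux _).ne, (hux _).ne.symm,
        (hcy _).ne, (hcy _).ne.symm, (hxy' _ _).symm, (hxc _).symm, (hyu _).symm]
  · rintro ⟨i, z | j⟩ ⟨i', z' | j'⟩ hadj <;>
      simp only [Bgraph, boxProd_adj, top_adj, completeBipartiteGraph_adj] at hadj <;>
      fin_cases i <;> fin_cases i' <;>
      simp_all [huc.symm, (hux _).symm, (hcy _).symm, (hxy _).symm]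

variable (G t) in
def InGoodSet (q : Finset V) : Prop :=
  ∃ S : Finset V, #S = t ∧ #S + 1 ≤ codeg G S ∧ q ⊆ S

theorem InGoodSet.mono {q q' : Finset V} (h : InGoodSet G t q) (hq : q' ⊆ q) :
    InGoodSet G t q' :=
  let ⟨S, hS, hgood, hqS⟩ := h
  ⟨S, hS, hgood, hq.trans hqS⟩

variable [Fintype V]

section

variable [DecidableRel G.Adj]

theorem IsBipartiteWith.sum_sum_degree_eq_sum_sq (hG : G.IsBipartiteWith V₁ V₂) :
    ∑ c ∈ V₂, ∑ u ∈ G.neighborFinset c, G.degree u = ∑ u ∈ V₁, G.degree u ^ 2 := by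
  rw [sum_comm' (t' := V₁) (s' := fun u => G.neighborFinset u)]
  · simp [sq, card_neighborFinset_eq_degree]
  · intro c u
    simp only [mem_neighborFinset, G.adj_comm c u]
    exact ⟨fun ⟨hc, huc⟩ => ⟨huc, hG.mem_of_mem_adj' hc huc⟩,
      fun ⟨huc, hu⟩ => ⟨hG.mem_of_mem_adj hu huc, huc⟩⟩

end

variable [DecidableEq V]

noncomputable instance : DecidablePred (InGoodSet G t) :=
  fun _ => by unfold InGoodSet; infer_instance

variable (G t) in
noncomputable def goodPairs (U : Finset V) : Finset (Finset V) :=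
  {q ∈ U.powersetCard 2 | InGoodSet G t q}

variable [DecidableRel G.Adj]

theorem codeg_eq_card (S : Finset V) : codeg G S = #{v | ∀ u ∈ S, G.Adj u v} := by
  rw [codeg, ← Set.ncard_coe_finset]
  simp

variable (G t) in
/-- `N₁(C₄, G)`, a `C₄` being recorded as the pair of its vertex pairs in `V₁` and in `V₂`. -/
noncomputable def goodC4s (V₁ V₂ : Finset V) : Finset (Finset V × Finset V) :=
  {p | p.1 ⊆ V₁ ∧ p.2 ⊆ V₂ ∧ #p.1 = 2 ∧ #p.2 = 2 ∧ (∀ u ∈ p.1, ∀ v ∈ p.2, G.Adj u v) ∧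
    InGoodSet G t ((p.1 ∪ p.2) ∩ V₁)}

theorem IsBipartiteWith.not_exists_matching (hG : G.IsBipartiteWith V₁ V₂)
    (hfree : ¬ ContainsCopy (Bgraph t) G) {u c : V} (hu : u ∈ V₁) (huc : G.Adj u c) :
    ¬ ∃ (x y : Fin t → V), Injective x ∧ Injective y ∧ ∀ j,
      x j ∈ (G.neighborFinset u).erase c ∧ y j ∈ (G.neighborFinset c).erase u ∧
        G.Adj (x j) (y j) := by
  rintro ⟨x, y, hx, hy, h⟩
  simp only [mem_erase, mem_neighborFinset] at h
  have hc : c ∈ V₂ := hG.mem_of_mem_adj hu huc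
  refine hfree (containsCopy_Bgraph_s10 huc hx hy (fun j => (h j).1.2) (fun j => (h j).2.1.2)
    (fun j => (h j).2.2) (fun j => (h j).1.1) (fun j => (h j).2.1.1) fun i j hij => ?_)
  have hxi : x i ∈ V₂ := hG.mem_of_mem_adj hu (h i).1.2
  have hyj : y j ∈ V₁ := hG.mem_of_mem_adj' hc (h j).2.1.2.symm
  rw [hij] at hxi
  exact Finset.disjoint_left.1 (disjoint_coe.1 hG.disjoint) hyj hxi

variable (G t) in
structure IsCoverFamily (c : V) (B C : V → Finset V) : Prop where
  card_lt : ∀ u ∈ G.neighborFinset c, #(B u) + #(C u) < t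
  cover : ∀ u ∈ G.neighborFinset c, ∀ d ∈ (G.neighborFinset u).erase c,
    ∀ w ∈ (G.neighborFinset c).erase u, G.Adj d w → d ∈ B u ∨ w ∈ C u

variable (G t) in
noncomputable def chargedSet (c : V) (B : V → Finset V) (d : V) : Finset V :=
  {u ∈ G.neighborFinset c ∩ G.neighborFinset d | d ∈ B u ∨
    #(G.neighborFinset c ∩ G.neighborFinset d) = t ∧
      codeg G (G.neighborFinset c ∩ G.neighborFinset d) ≤ t}

namespace IsCoverFamily

variable {c d u : V} {B C : V → Finset V}

theorem inter_erase_subset (hBC : IsCoverFamily G t c B C) (hdc : d ≠ c)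
    (hu : u ∈ G.neighborFinset c ∩ G.neighborFinset d) (hdB : d ∉ B u) :
    (G.neighborFinset c ∩ G.neighborFinset d).erase u ⊆ C u := by
  intro w hw
  simp only [mem_erase, mem_inter, mem_neighborFinset] at hu hw
  refine (hBC.cover u (by simpa using hu.1) d ?_ w ?_ hw.2.2).resolve_left hdB
  · simpa [hdc] using hu.2.symm
  · simpa [hw.1] using hw.2.1

theorem card_inter_add_card_le (hBC : IsCoverFamily G t c B C) (hdc : d ≠ c)
    (hu : u ∈ G.neighborFinset c ∩ G.neighborFinset d) (hdB : d ∉ B u) :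
    #(G.neighborFinset c ∩ G.neighborFinset d) + #(B u) ≤ t := by
  have h := card_le_card (hBC.inter_erase_subset hdc hu hdB)
  have := hBC.card_lt u (mem_of_mem_inter_left hu)
  rw [card_erase_of_mem hu] at h
  have := card_pos.2 ⟨u, hu⟩
  omega

theorem inter_eq_insert (hBC : IsCoverFamily G t c B C) (hdc : d ≠ c)
    (hu : u ∈ G.neighborFinset c ∩ G.neighborFinset d) (hdB : d ∉ B u)
    (ht : #(G.neighborFinset c ∩ G.neighborFinset d) = t) :
    G.neighborFinset c ∩ G.neighborFinset d = insert u (C u) := by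
  have := hBC.card_lt u (mem_of_mem_inter_left hu)
  rw [← eq_of_subset_of_card_le (hBC.inter_erase_subset hdc hu hdB)
    (by rw [card_erase_of_mem hu]; omega), insert_erase hu]

/-- `C(t, 2) (|N(c) ∩ N(d)| - t + 1) ≤ #goodPairs + C(t, 2) #chargedSet`, arranged to avoid
truncated subtraction. -/
theorem choose_two_mul_card_inter_le (hBC : IsCoverFamily G t c B C) (hdc : d ≠ c) :
    t.choose 2 * (#(G.neighborFinset c ∩ G.neighborFinset d) + 1) ≤
      #(goodPairs G t (G.neighborFinset c ∩ G.neighborFinset d)) +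
        t.choose 2 * (t + #(chargedSet G t c B d)) := by
  obtain rfl | ht := t.eq_zero_or_pos
  · simp
  obtain hlt | hge := lt_or_ge #(G.neighborFinset c ∩ G.neighborFinset d) t
  · exact (Nat.mul_le_mul_left _ (by omega)).trans (le_add_left le_rfl)
  by_cases hall : ∀ u ∈ G.neighborFinset c ∩ G.neighborFinset d, d ∈ B u
  · rw [chargedSet, filter_true_of_mem fun u hu => Or.inl (hall u hu)]
    exact (Nat.mul_le_mul_left _ (by omega)).trans (le_add_left le_rfl)
  push Not at hall
  obtain ⟨u, hu, hdB⟩ := hall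
  have hU := le_antisymm (by have := hBC.card_inter_add_card_le hdc hu hdB; omega) hge
  by_cases hgood : t < codeg G (G.neighborFinset c ∩ G.neighborFinset d)
  · have : goodPairs G t (G.neighborFinset c ∩ G.neighborFinset d) =
        (G.neighborFinset c ∩ G.neighborFinset d).powersetCard 2 :=
      filter_true_of_mem fun q hq => ⟨_, hU, hU ▸ hgood, (mem_powersetCard.1 hq).1⟩
    rw [this, card_powersetCard, hU]
    nlinarith
  · have : 1 ≤ #(chargedSet G t c B d) :=
      card_pos.2 ⟨u, mem_filter.2 ⟨hu, Or.inr ⟨hU, by omega⟩⟩⟩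
    rw [hU]
    nlinarith

theorem card_filter_mem_chargedSet_add_one_le (hBC : IsCoverFamily G t c B C)
    (hu : u ∈ G.neighborFinset c) {s : Finset V} (hs : c ∉ s) :
    #{d ∈ s | u ∈ chargedSet G t c B d} + 1 ≤ t := by
  by_cases hex : ∃ d₀ ∈ s, u ∈ G.neighborFinset c ∩ G.neighborFinset d₀ ∧ d₀ ∉ B u ∧
      #(G.neighborFinset c ∩ G.neighborFinset d₀) = t ∧
        codeg G (G.neighborFinset c ∩ G.neighborFinset d₀) ≤ t
  · obtain ⟨d₀, hd₀, hu₀, hdB₀, hcard₀, hcodeg₀⟩ := hex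
    rw [codeg_eq_card] at hcodeg₀
    set W : Finset V := {v | ∀ w ∈ G.neighborFinset c ∩ G.neighborFinset d₀, G.Adj w v}
    have hd₀c : d₀ ≠ c := ne_of_mem_of_not_mem hd₀ hs
    have hB : B u = ∅ := card_eq_zero.1 (by
      have := hBC.card_inter_add_card_le hd₀c hu₀ hdB₀; omega)
    -- every `d` charging `u` has the same common neighbourhood with `c` as `d₀`
    have hsub : {d ∈ s | u ∈ chargedSet G t c B d} ⊆ W.erase c := by
      intro d hd
      obtain ⟨hds, hud, hcharge⟩ := by simpa only [chargedSet, mem_filter] using hd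
      have hdc : d ≠ c := ne_of_mem_of_not_mem hds hs
      have hdB : d ∉ B u := by simp [hB]
      have hU : G.neighborFinset c ∩ G.neighborFinset d =
          G.neighborFinset c ∩ G.neighborFinset d₀ := by
        rw [hBC.inter_eq_insert hdc hud hdB (hcharge.resolve_left hdB).1,
          hBC.inter_eq_insert hd₀c hu₀ hdB₀ hcard₀]
      refine mem_erase.2 ⟨hdc, mem_filter.2 ⟨mem_univ _, fun w hw => ?_⟩⟩
      rw [← hU] at hw
      exact ((mem_neighborFinset _ _ _).1 (mem_inter.1 hw).2).symm
    have hc : c ∈ W := mem_filter.2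
      ⟨mem_univ _, fun w hw => ((mem_neighborFinset _ _ _).1 (mem_inter.1 hw).1).symm⟩
    have := card_le_card hsub
    rw [card_erase_of_mem hc] at this
    have := card_pos.2 ⟨u, hu₀⟩
    omega
  · push Not at hex
    have hsub : {d ∈ s | u ∈ chargedSet G t c B d} ⊆ B u := by
      intro d hd
      obtain ⟨hds, hud, hcharge⟩ := by simpa only [chargedSet, mem_filter] using hd
      by_contra hdB
      obtain ⟨hcard, hcodeg⟩ := hcharge.resolve_left hdB
      exact (hex d hds hud hdB hcard).not_ge hcodeg
    have := card_le_card hsub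
    have := hBC.card_lt u hu
    omega

theorem sum_card_chargedSet_add_degree_le (hBC : IsCoverFamily G t c B C) {s : Finset V}
    (hs : c ∉ s) : ∑ d ∈ s, #(chargedSet G t c B d) + G.degree c ≤ t * G.degree c := by
  have hswap := sum_card_bipartiteAbove_eq_sum_card_bipartiteBelow (s := s)
    (t := G.neighborFinset c) (r := fun d u => u ∈ chargedSet G t c B d)
  have habove : ∀ d, (G.neighborFinset c).bipartiteAbove (fun d u => u ∈ chargedSet G t c B d) d =
      chargedSet G t c B d := fun d =>
    filter_mem_eq_inter.trans <| inter_eq_right.2 fun u hu =>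
      mem_of_mem_inter_left (mem_filter.1 hu).1
  simp only [habove] at hswap
  rw [hswap, ← card_neighborFinset_eq_degree]
  calc _ = ∑ u ∈ G.neighborFinset c, (#{d ∈ s | u ∈ chargedSet G t c B d} + 1) := by
        rw [sum_add_distrib, sum_const, smul_eq_mul, mul_one]; rfl
    _ ≤ ∑ u ∈ G.neighborFinset c, t :=
        sum_le_sum fun u hu => hBC.card_filter_mem_chargedSet_add_one_le hu hs
    _ = t * #(G.neighborFinset c) := by rw [sum_const, smul_eq_mul, mul_comm]

end IsCoverFamily

namespace IsBipartiteWith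

variable {c : V}

theorem exists_isCoverFamily (hG : G.IsBipartiteWith V₁ V₂)
    (hfree : ¬ ContainsCopy (Bgraph t) G) (hc : c ∈ V₂) :
    ∃ B C : V → Finset V, IsCoverFamily G t c B C := by
  have : ∀ u ∈ G.neighborFinset c, ∃ B C : Finset V, #B + #C < t ∧
      ∀ d ∈ (G.neighborFinset u).erase c, ∀ w ∈ (G.neighborFinset c).erase u,
        G.Adj d w → d ∈ B ∨ w ∈ C := by
    intro u hu
    have huc : G.Adj u c := ((mem_neighborFinset _ _ _).1 hu).symm
    obtain ⟨B, -, C, -, hcard, hcover⟩ := exists_cover_of_not_exists_matching G.Adj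
      (hG.not_exists_matching hfree (hG.mem_of_mem_adj' hc huc) huc)
    exact ⟨B, C, hcard, hcover⟩
  choose! B C hcard hcover using this
  exact ⟨B, C, hcard, hcover⟩

theorem sum_card_inter_add_degree (hG : G.IsBipartiteWith V₁ V₂) (hc : c ∈ V₂) :
    ∑ d ∈ V₂.erase c, #(G.neighborFinset c ∩ G.neighborFinset d) + G.degree c =
      ∑ u ∈ G.neighborFinset c, G.degree u := by
  have hswap := sum_card_bipartiteAbove_eq_sum_card_bipartiteBelow (s := V₂.erase c)
    (t := G.neighborFinset c) (r := fun d u => G.Adj d u)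
  have habove : ∀ d, (G.neighborFinset c).bipartiteAbove (fun d u => G.Adj d u) d =
      G.neighborFinset c ∩ G.neighborFinset d := fun d => by
    ext u; simp [bipartiteAbove]
  have hbelow : ∀ u ∈ G.neighborFinset c, (V₂.erase c).bipartiteBelow (fun d u => G.Adj d u) u =
      (G.neighborFinset u).erase c := fun u hu => by
    have hu₁ : u ∈ V₁ := hG.mem_of_mem_adj' hc ((mem_neighborFinset _ _ _).1 hu).symm
    ext d
    simp only [bipartiteBelow, mem_filter, mem_erase, mem_neighborFinset]
    exact ⟨fun ⟨⟨hdc, _⟩, hdu⟩ => ⟨hdc, hdu.symm⟩,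
      fun ⟨hdc, hud⟩ => ⟨⟨hdc, hG.mem_of_mem_adj hu₁ hud⟩, hud.symm⟩⟩
  simp only [habove] at hswap
  rw [hswap, ← card_neighborFinset_eq_degree, card_eq_sum_ones, ← sum_add_distrib]
  refine sum_congr rfl fun u hu => ?_
  have hcu : c ∈ G.neighborFinset u := by simpa [adj_comm] using hu
  rw [hbelow u hu, card_erase_add_one hcu, card_neighborFinset_eq_degree]

end IsBipartiteWith

theorem IsBipartiteWith.sum_card_goodPairs_le (hG : G.IsBipartiteWith V₁ V₂) {c : V} (hc : c ∈ V₂) :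
    ∑ d ∈ V₂.erase c, #(goodPairs G t (G.neighborFinset c ∩ G.neighborFinset d)) ≤
      #{p ∈ goodC4s G t V₁ V₂ | c ∈ p.2} := by
  rw [← card_sigma]
  refine card_le_card_of_injOn (fun x => (x.2, {c, x.1})) (fun ⟨d, q⟩ h => ?_) ?_
  · simp only [coe_sigma, Set.mem_sigma_iff, mem_coe, mem_erase, goodPairs, mem_filter,
      mem_powersetCard, subset_inter_iff] at h
    obtain ⟨⟨hdc, hd⟩, ⟨⟨hqc, hqd⟩, hq⟩, hgood⟩ := h
    have hqV₁ : q ⊆ V₁ := fun u hu =>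
      hG.mem_of_mem_adj' hc ((mem_neighborFinset _ _ _).1 (hqc hu)).symm
    simp only [goodC4s, mem_coe, mem_filter, mem_univ, true_and, mem_insert_self, and_true]
    refine ⟨hqV₁, insert_subset hc (singleton_subset_iff.2 hd), hq, card_pair hdc.symm, ?_,
      hgood.mono ?_⟩
    · intro u hu v hv
      rcases mem_insert.1 hv with rfl | hv
      · exact ((mem_neighborFinset _ _ _).1 (hqc hu)).symm
      · rw [mem_singleton.1 hv]
        exact ((mem_neighborFinset _ _ _).1 (hqd hu)).symm
    · intro u hu
      simp only [mem_inter, mem_union, mem_insert, mem_singleton] at hu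
      obtain ⟨hu | rfl | rfl, hu₁⟩ := hu
      · exact hu
      · exact absurd hc (Finset.disjoint_left.1 (disjoint_coe.1 hG.disjoint) hu₁)
      · exact absurd hd (Finset.disjoint_left.1 (disjoint_coe.1 hG.disjoint) hu₁)
  · rintro ⟨d, q⟩ h ⟨d', q'⟩ h' heq
    simp only [coe_sigma, Set.mem_sigma_iff, mem_coe, mem_erase] at h h'
    simp only [Prod.mk.injEq] at heq
    obtain ⟨rfl, hcd⟩ := heq
    have : d ∈ ({c, d'} : Finset V) := hcd ▸ mem_insert_of_mem (mem_singleton_self d)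
    rcases mem_insert.1 this with hdc | hdd'
    · exact absurd hdc h.1.1
    · rw [mem_singleton.1 hdd']

theorem sum_card_filter_goodC4s :
    ∑ c ∈ V₂, #{p ∈ goodC4s G t V₁ V₂ | c ∈ p.2} = 2 * #(goodC4s G t V₁ V₂) := by
  have hswap := sum_card_bipartiteAbove_eq_sum_card_bipartiteBelow (s := V₂)
    (t := goodC4s G t V₁ V₂) (r := fun c p => c ∈ p.2)
  simp only [bipartiteAbove] at hswap
  rw [hswap, mul_comm, ← smul_eq_mul, ← sum_const]
  refine sum_congr rfl fun p hp => ?_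
  simp only [goodC4s, mem_filter, mem_univ, true_and] at hp
  rw [bipartiteBelow, filter_mem_eq_inter, inter_eq_right.2 hp.2.1, hp.2.2.2.1]

theorem IsBipartiteWith.choose_two_mul_sum_degree_le (hG : G.IsBipartiteWith V₁ V₂)
    (hfree : ¬ ContainsCopy (Bgraph t) G) {c : V} (hc : c ∈ V₂) :
    t.choose 2 * (∑ u ∈ G.neighborFinset c, G.degree u + #(V₂.erase c)) ≤
      ∑ d ∈ V₂.erase c, #(goodPairs G t (G.neighborFinset c ∩ G.neighborFinset d)) +
        t.choose 2 * t * (#(V₂.erase c) + G.degree c) := by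
  obtain ⟨B, C, hBC⟩ := hG.exists_isCoverFamily hfree hc
  have hdeficit := sum_le_sum fun d (hd : d ∈ V₂.erase c) =>
    hBC.choose_two_mul_card_inter_le (ne_of_mem_erase hd)
  have hcharge := hBC.sum_card_chargedSet_add_degree_le (notMem_erase c V₂)
  rw [← hG.sum_card_inter_add_degree hc]
  simp only [mul_add, mul_one, sum_add_distrib, ← mul_sum, sum_const, smul_eq_mul] at hdeficit
  nlinarith [Nat.mul_le_mul_left (t.choose 2) hcharge]

theorem IsBipartiteWith.choose_two_mul_le_two_mul_card_goodC4s (hG : G.IsBipartiteWith V₁ V₂)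
    (hfree : ¬ ContainsCopy (Bgraph t) G) :
    t.choose 2 * (∑ u ∈ V₁, G.degree u ^ 2 + #V₂ * (#V₂ - 1)) ≤
      2 * #(goodC4s G t V₁ V₂) + t.choose 2 * t * (#V₂ * (#V₂ - 1) + #G.edgeFinset) := by
  have hpairs : ∑ c ∈ V₂, #(V₂.erase c) = #V₂ * (#V₂ - 1) := by
    rw [sum_congr rfl fun c hc => card_erase_of_mem hc, sum_const, smul_eq_mul]
  have hper := sum_le_sum fun c (hc : c ∈ V₂) => hG.choose_two_mul_sum_degree_le hfree hc
  have hgood := sum_le_sum fun c (hc : c ∈ V₂) => hG.sum_card_goodPairs_le (t := t) hc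
  rw [sum_card_filter_goodC4s] at hgood
  simp only [← mul_sum, sum_add_distrib, hpairs, hG.sum_sum_degree_eq_sum_sq,
    isBipartiteWith_sum_degrees_eq_card_edges' hG] at hper
  omega

theorem IsBipartiteWith.half_choose_two_mul_le_card_goodC4s (hG : G.IsBipartiteWith V₁ V₂)
    (hfree : ¬ ContainsCopy (Bgraph t) G) :
    (1 / 2 : ℝ) * t.choose 2 * (∑ u ∈ V₁, (G.degree u : ℝ) ^ 2
      - (2 * t - 1) * #G.edgeFinset - (t - 1) * #V₂ ^ 2) ≤ #(goodC4s G t V₁ V₂) := by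
  have hkey := hG.choose_two_mul_le_two_mul_card_goodC4s hfree
  have hpairs : ((#V₂ * (#V₂ - 1) : ℕ) : ℝ) ≤ (#V₂ : ℝ) ^ 2 := by
    rw [sq]
    exact_mod_cast Nat.mul_le_mul_left _ (Nat.sub_le _ _)
  have hchoose : (0 : ℝ) ≤ t.choose 2 * ((t : ℝ) - 1) := by
    rcases t with _ | t
    · simp
    · push_cast
      rw [add_sub_cancel_right]
      positivity
  generalize #V₂ * (#V₂ - 1) = m at hkey hpairs
  have hkeyℝ := (Nat.cast_le (α := ℝ)).2 hkey
  push_cast at hkeyℝ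
  nlinarith [mul_nonneg hchoose (sub_nonneg.2 hpairs),
    mul_nonneg hchoose (Nat.cast_nonneg (α := ℝ) #G.edgeFinset)]

end SimpleGraph

theorem bip_NC4_lower_general (t n : ℕ) (G : SimpleGraph (Fin n))
    (V1 V2 : Finset (Fin n)) (hdisj : Disjoint V1 V2)
    (hbip : ∀ ⦃u v : Fin n⦄, G.Adj u v → (u ∈ V1 ∧ v ∈ V2) ∨ (u ∈ V2 ∧ v ∈ V1))
    (hfree : ¬ ContainsCopy (Bgraph t) G) :
    (1 / 2 : ℝ) * (t.choose 2 : ℝ) *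
        ((∑ u ∈ V1, ((G.neighborSet u).ncard : ℝ) ^ 2)
          - (2 * (t : ℝ) - 1) * (G.edgeSet.ncard : ℝ) - ((t : ℝ) - 1) * (V2.card : ℝ) ^ 2)
      ≤ ({p : Finset (Fin n) × Finset (Fin n) |
            p.1 ⊆ V1 ∧ p.2 ⊆ V2 ∧ p.1.card = 2 ∧ p.2.card = 2 ∧
            (∀ u ∈ p.1, ∀ v ∈ p.2, G.Adj u v) ∧
            ∃ S : Finset (Fin n), S.card = t ∧ S.card + 1 ≤ codeg G S ∧
              (p.1 ∪ p.2) ∩ V1 ⊆ S}.ncard : ℝ) := by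
  classical
  have hG : G.IsBipartiteWith V1 V2 := ⟨disjoint_coe.2 hdisj, hbip⟩
  convert hG.half_choose_two_mul_le_card_goodC4s hfree using 3
  · rw [← coe_edgeFinset, Set.ncard_coe_finset]
    congr! 3 with u
    rw [← card_neighborFinset_eq_degree, ← Set.ncard_coe_finset, coe_neighborFinset]
  · rw [← Set.ncard_coe_finset]
    congr
    ext p
    simp [goodC4s, InGoodSet]

theorem bip_NC4_lower (t n : ℕ) (ht : 1 ≤ t) (G : SimpleGraph (Fin n))
    (V1 V2 : Finset (Fin n)) (hdisj : Disjoint V1 V2) (hcover : V1 ∪ V2 = Finset.univ)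
    (hbip : ∀ ⦃u v : Fin n⦄, G.Adj u v → (u ∈ V1 ∧ v ∈ V2) ∨ (u ∈ V2 ∧ v ∈ V1))
    (hfree : ¬ ContainsCopy (Bgraph t) G) :
    (1 / 2 : ℝ) * (t.choose 2 : ℝ) *
        ((∑ u ∈ V1, ((G.neighborSet u).ncard : ℝ) ^ 2)
          - (2 * (t : ℝ) - 1) * (G.edgeSet.ncard : ℝ) - ((t : ℝ) - 1) * (V2.card : ℝ) ^ 2)
      ≤ ({p : Finset (Fin n) × Finset (Fin n) |
            p.1 ⊆ V1 ∧ p.2 ⊆ V2 ∧ p.1.card = 2 ∧ p.2.card = 2 ∧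
            (∀ u ∈ p.1, ∀ v ∈ p.2, G.Adj u v) ∧
            ∃ S : Finset (Fin n), S.card = t ∧ S.card + 1 ≤ codeg G S ∧
              (p.1 ∪ p.2) ∩ V1 ⊆ S}.ncard : ℝ) :=
  bip_NC4_lower_general t n G V1 V2 hdisj hbip hfree
end

section
/- Let T be a tree on t vertices and let G be a bipartite graph with parts X and Y having at least one edge. Assume that for every edge xy ∈ E(G) with x ∈ X and y ∈ Y, the vertex y has at least t neighbors z such that |N(x) ∩ N(z)| ≥ t. Then G contains K_2 □ T as a subgraph. -/
open SimpleGraph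

/-!
Embed `K₂ □ T` one leaf of `T` at a time. Every copy of a vertex of `T` is a rung: an edge of `G`,
with one end in `X` and one in `Y`. After embedding a subtree on fewer than `t` vertices, at most
`t - 1` used vertices lie on each side. To attach a leaf at the rung `xy` (`x ∈ X`), the hypothesis
provides `t` candidates `z ∈ N(y)`, one of them unused, and then `t` common neighbours `w` of `x`
and `z`, one of them unused; `wz` is the new rung, `w ∼ x` and `z ∼ y`.
-/

open Function Set

section

variable {V : Type*} {G : SimpleGraph V}

lemma SimpleGraph.Adj.injective_and_adj_pair {a b : V} (h : G.Adj a b) :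
    Injective ![a, b] ∧
      ∀ ⦃i j : Fin 2⦄, (⊤ : SimpleGraph (Fin 2)).Adj i j → G.Adj (![a, b] i) (![a, b] j) := by
  constructor
  · intro i j hij
    fin_cases i <;> fin_cases j <;> simp_all [h.ne, h.ne']
  · intro i j hij
    fin_cases i <;> fin_cases j <;> simp_all [h.symm]

namespace ContainsCopy

variable {ι W : Type*} {H : SimpleGraph ι} {T : SimpleGraph W}

lemma boxProd_of_subsingleton [Subsingleton W] (hH : ContainsCopy H G) :
    ContainsCopy (H.boxProd T) G := by
  obtain ⟨g, hg_inj, hg⟩ := hH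
  refine ⟨fun p => g p.1, fun p q hpq => Prod.ext (hg_inj hpq) (Subsingleton.elim _ _), ?_⟩
  rintro ⟨i, w⟩ ⟨j, w'⟩ (⟨hij, -⟩ | ⟨hww', -⟩)
  · exact hg hij
  · exact absurd hww' (Subsingleton.elim w w' ▸ T.irrefl)

lemma boxProd_of_leaf {u v : W} (hvu : T.Adj v u) (hu : ∀ w, T.Adj v w → w = u)
    {f : ι × ({v}ᶜ : Set W) → V} (hf_inj : Injective f)
    (hf : ∀ ⦃a b⦄, (H.boxProd (T.induce {v}ᶜ)).Adj a b → G.Adj (f a) (f b))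
    {g : ι → V} (hg_inj : Injective g) (hg : ∀ ⦃i j⦄, H.Adj i j → G.Adj (g i) (g j))
    (hfg : ∀ i, G.Adj (f (i, ⟨u, hvu.ne'⟩)) (g i)) (hg_fresh : ∀ i, g i ∉ range f) :
    ContainsCopy (H.boxProd T) G := by
  classical
  refine ⟨fun p => if h : p.2 = v then g p.1 else f (p.1, ⟨p.2, h⟩), ?_, ?_⟩
  · rintro ⟨i, w⟩ ⟨j, w'⟩ h
    dsimp only at h
    by_cases hw : w = v <;> by_cases hw' : w' = v
    · subst hw hw'
      rw [dif_pos rfl, dif_pos rfl] at h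
      rw [hg_inj h]
    · rw [dif_pos hw, dif_neg hw'] at h
      exact absurd ⟨_, h.symm⟩ (hg_fresh i)
    · rw [dif_neg hw, dif_pos hw'] at h
      exact absurd ⟨_, h⟩ (hg_fresh j)
    · rw [dif_neg hw, dif_neg hw'] at h
      obtain ⟨rfl, hww'⟩ := Prod.ext_iff.1 (hf_inj h)
      exact Prod.ext rfl (congrArg Subtype.val hww')
  · rintro ⟨i, w⟩ ⟨j, w'⟩ (⟨hij, rfl⟩ | ⟨hww', rfl⟩)
    · by_cases hw : w = v
      · simpa [hw] using hg hij
      · simpa [hw] using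
          hf (a := (i, ⟨w, hw⟩)) (b := (j, ⟨w, hw⟩)) (boxProd_adj.2 (Or.inl ⟨hij, rfl⟩))
    · by_cases hw : w = v <;> by_cases hw' : w' = v
      · exact absurd (hw ▸ hw' ▸ hww') T.irrefl
      · subst hw
        obtain rfl := hu w' hww'
        simpa [hw'] using (hfg i).symm
      · subst hw'
        obtain rfl := hu w hww'.symm
        simpa [hw] using hfg i
      · simpa [hw, hw'] using
          hf (a := (i, ⟨w, hw⟩)) (b := (i, ⟨w', hw'⟩)) (boxProd_adj.2 (Or.inr ⟨hww', rfl⟩))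

end ContainsCopy

section Bipartite

variable {X Y : Set V} {t : ℕ}

lemma mem_of_adj_of_mem (hdisj : Disjoint X Y)
    (hbip : ∀ ⦃u v : V⦄, G.Adj u v → (u ∈ X ∧ v ∈ Y) ∨ (u ∈ Y ∧ v ∈ X))
    {u v : V} (huv : G.Adj u v) (hu : u ∈ X) : v ∈ Y := by
  rcases hbip huv with ⟨-, hv⟩ | ⟨hu', -⟩
  · exact hv
  · exact absurd hu' (hdisj.notMem_of_mem_left hu)

lemma ncard_range_inter_le (hdisj : Disjoint X Y)
    (hbip : ∀ ⦃u v : V⦄, G.Adj u v → (u ∈ X ∧ v ∈ Y) ∨ (u ∈ Y ∧ v ∈ X))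
    {W : Type*} [Finite W] {f : Fin 2 × W → V} (hf : ∀ w, G.Adj (f (0, w)) (f (1, w))) :
    (range f ∩ X).ncard ≤ Nat.card W := by
  classical
  let e : W → V := fun w => if f (0, w) ∈ X then f (0, w) else f (1, w)
  have hsub : range f ∩ X ⊆ range e := by
    rintro _ ⟨⟨⟨i, w⟩, rfl⟩, hX⟩
    have hnot : f (0, w) ∈ X → f (1, w) ∉ X := fun h0 h1 =>
      hdisj.notMem_of_mem_left h1 (mem_of_adj_of_mem hdisj hbip (hf w) h0)
    refine ⟨w, ?_⟩
    fin_cases i <;> simp_all [e]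
  calc (range f ∩ X).ncard ≤ (range e).ncard := ncard_le_ncard hsub (finite_range e)
    _ ≤ Nat.card W := by rw [← image_univ, ← ncard_univ]; exact ncard_image_le

lemma exists_fresh_square (hdisj : Disjoint X Y)
    (hbip : ∀ ⦃u v : V⦄, G.Adj u v → (u ∈ X ∧ v ∈ Y) ∨ (u ∈ Y ∧ v ∈ X))
    (hcond : ∀ ⦃x y : V⦄, x ∈ X → y ∈ Y → G.Adj x y →
      t ≤ {z : V | G.Adj y z ∧ t ≤ (G.neighborSet x ∩ G.neighborSet z).ncard}.ncard)
    {x y : V} (hx : x ∈ X) (hy : y ∈ Y) (hxy : G.Adj x y) {U : Set V} (hU : U.Finite)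
    (hUX : (U ∩ X).ncard < t) (hUY : (U ∩ Y).ncard < t) :
    ∃ w z, G.Adj x w ∧ G.Adj y z ∧ G.Adj w z ∧ w ∉ U ∧ z ∉ U := by
  obtain ⟨z, ⟨hyz, hcodeg⟩, hzU⟩ :=
    exists_mem_notMem_of_ncard_lt_ncard (hUX.trans_le (hcond hx hy hxy)) (hU.inter_of_left _)
  have hzX : z ∈ X := mem_of_adj_of_mem hdisj.symm (fun _ _ h => (hbip h).symm) hyz hy
  obtain ⟨w, ⟨hxw, hzw⟩, hwU⟩ :=
    exists_mem_notMem_of_ncard_lt_ncard (hUY.trans_le hcodeg) (hU.inter_of_left _)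
  have hwY : w ∈ Y := mem_of_adj_of_mem hdisj hbip hxw hx
  exact ⟨w, z, hxw, hyz, hzw.symm, fun h => hwU ⟨h, hwY⟩, fun h => hzU ⟨h, hzX⟩⟩

lemma exists_fresh_rung (hdisj : Disjoint X Y)
    (hbip : ∀ ⦃u v : V⦄, G.Adj u v → (u ∈ X ∧ v ∈ Y) ∨ (u ∈ Y ∧ v ∈ X))
    (hcond : ∀ ⦃x y : V⦄, x ∈ X → y ∈ Y → G.Adj x y →
      t ≤ {z : V | G.Adj y z ∧ t ≤ (G.neighborSet x ∩ G.neighborSet z).ncard}.ncard)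
    {a b : V} (hab : G.Adj a b) {U : Set V} (hU : U.Finite)
    (hUX : (U ∩ X).ncard < t) (hUY : (U ∩ Y).ncard < t) :
    ∃ a' b', G.Adj a a' ∧ G.Adj b b' ∧ G.Adj a' b' ∧ a' ∉ U ∧ b' ∉ U := by
  rcases hbip hab with ⟨ha, hb⟩ | ⟨ha, hb⟩
  · exact exists_fresh_square hdisj hbip hcond ha hb hab hU hUX hUY
  · obtain ⟨b', a', hbb', haa', hba', hbU, haU⟩ :=
      exists_fresh_square hdisj hbip hcond hb ha hab.symm hU hUX hUY
    exact ⟨a', b', haa', hbb', hba'.symm, haU, hbU⟩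

theorem containsCopy_top_boxProd_of_isTree (hdisj : Disjoint X Y)
    (hbip : ∀ ⦃u v : V⦄, G.Adj u v → (u ∈ X ∧ v ∈ Y) ∨ (u ∈ Y ∧ v ∈ X))
    (hcond : ∀ ⦃x y : V⦄, x ∈ X → y ∈ Y → G.Adj x y →
      t ≤ {z : V | G.Adj y z ∧ t ≤ (G.neighborSet x ∩ G.neighborSet z).ncard}.ncard)
    (hne : G.edgeSet.Nonempty) (W : Type*) [Finite W] (hW : Nat.card W ≤ t)
    (T : SimpleGraph W) (hT : T.IsTree) :
    ContainsCopy ((⊤ : SimpleGraph (Fin 2)).boxProd T) G := by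
  induction W using Finite.induction_subsingleton_or_nontrivial with
  | hbase W =>
    obtain ⟨⟨a, b⟩, hab⟩ := hne
    exact ContainsCopy.boxProd_of_subsingleton ⟨_, hab.injective_and_adj_pair⟩
  | hstep W ih =>
    have := Fintype.ofFinite W
    classical
    obtain ⟨v, hv⟩ := hT.exists_vert_degree_one_of_nontrivial
    obtain ⟨u, hvu, hu⟩ := degree_eq_one_iff_existsUnique_adj.1 hv
    have hT' : (T.induce {v}ᶜ).IsTree :=
      ⟨hT.connected.induce_compl_singleton_of_degree_eq_one hv, hT.isAcyclic.induce _⟩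
    have hcard : Nat.card ({v}ᶜ : Set W) < Nat.card W := Finite.card_subtype_lt (x := v) (by simp)
    obtain ⟨f, hf_inj, hf⟩ := ih _ hcard (by omega) _ hT'
    have hrung : ∀ w, G.Adj (f (0, w)) (f (1, w)) := fun w =>
      hf (boxProd_adj.2 (Or.inl ⟨by simp, rfl⟩))
    obtain ⟨a', b', ha, hb, hab, ha', hb'⟩ := exists_fresh_rung hdisj hbip hcond
      (hrung ⟨u, hvu.ne'⟩) (finite_range f)
      ((ncard_range_inter_le hdisj hbip hrung).trans_lt (by omega))
      ((ncard_range_inter_le hdisj.symm (fun _ _ h => (hbip h).symm) hrung).trans_lt (by omega))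
    obtain ⟨hg_inj, hg⟩ := hab.injective_and_adj_pair
    refine ContainsCopy.boxProd_of_leaf hvu hu hf_inj hf hg_inj hg ?_ ?_ <;>
      intro i <;> fin_cases i <;> assumption

end Bipartite

end

theorem embed_K2_tree_general {V : Type*} (t : ℕ) (T : SimpleGraph (Fin t))
    (hT : T.IsTree) (G : SimpleGraph V) (X Y : Set V)
    (hdisj : Disjoint X Y)
    (hbip : ∀ ⦃u v : V⦄, G.Adj u v → (u ∈ X ∧ v ∈ Y) ∨ (u ∈ Y ∧ v ∈ X))
    (hne : G.edgeSet.Nonempty)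
    (hcond : ∀ ⦃x y : V⦄, x ∈ X → y ∈ Y → G.Adj x y →
      t ≤ {z : V | G.Adj y z ∧ t ≤ (G.neighborSet x ∩ G.neighborSet z).ncard}.ncard) :
    ContainsCopy ((⊤ : SimpleGraph (Fin 2)).boxProd T) G :=
  containsCopy_top_boxProd_of_isTree hdisj hbip hcond hne (Fin t) (by simp) T hT

theorem embed_K2_tree {V : Type*} [Fintype V] (t : ℕ) (T : SimpleGraph (Fin t))
    (hT : T.IsTree) (G : SimpleGraph V) (X Y : Set V)
    (hdisj : Disjoint X Y) (hcover : X ∪ Y = Set.univ)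
    (hbip : ∀ ⦃u v : V⦄, G.Adj u v → (u ∈ X ∧ v ∈ Y) ∨ (u ∈ Y ∧ v ∈ X))
    (hne : G.edgeSet.Nonempty)
    (hcond : ∀ ⦃x y : V⦄, x ∈ X → y ∈ Y → G.Adj x y →
      t ≤ {z : V | G.Adj y z ∧ t ≤ (G.neighborSet x ∩ G.neighborSet z).ncard}.ncard) :
    ContainsCopy ((⊤ : SimpleGraph (Fin 2)).boxProd T) G :=
  embed_K2_tree_general t T hT G X Y hdisj hbip hne hcond
end

section
/- Let t be a positive integer and set s = ⌊(t+1)/2⌋. Let G₁ be a graph containing no subgraph isomorphic to the 4-cycle C_4, and let G = G₁(s) be the s-blow-up of G₁. Then G contains no subgraph isomorphic to B_t. -/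
open SimpleGraph

/-- The `s`-blow-up of a graph: each vertex is replaced by an independent set of size `s`,
and each edge by a complete bipartite graph between the corresponding sets. -/
def blowup {α : Type*} (G : SimpleGraph α) (s : ℕ) : SimpleGraph (α × Fin s) where
  Adj x y := G.Adj x.1 y.1
  symm := ⟨fun _ _ h => G.adj_symm h⟩
  loopless := ⟨fun x h => G.irrefl h⟩

/-!
Project a copy of `B_t` in `G(s)` to `G`, with spine `a b` and rungs `xⱼ yⱼ`. Since `G` has no
`C₄`, the closed walk `a xⱼ yⱼ b` must degenerate, so `xⱼ = b` or `yⱼ = a` for every `j`. The rung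
vertices with `xⱼ = b` lie, together with the spine vertex over `b`, in the independent set of size
`s` over `b`, so there are at most `s - 1` of them; likewise over `a`. Hence `t + 2 ≤ 2s`, which
fails for `s = ⌊(t+1)/2⌋`.
-/

open Finset

theorem containsCopy_cycleGraph_four {α : Type*} {G : SimpleGraph α} {a b c d : α}
    (hab : G.Adj a b) (hbc : G.Adj b c) (hcd : G.Adj c d) (hda : G.Adj d a)
    (hac : a ≠ c) (hbd : b ≠ d) : ContainsCopy (cycleGraph 4) G := by
  refine ⟨![a, b, c, d], ?_, ?_⟩
  · have := hab.ne; have := hbc.ne; have := hcd.ne; have := hda.ne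
    intro i j h
    fin_cases i <;> fin_cases j <;> simp_all [eq_comm]
  · intro i j h
    fin_cases i <;> fin_cases j <;> simp_all [cycleGraph_adj, G.adj_comm] <;> contradiction

theorem eq_or_eq_of_cycleGraph_four_free {α : Type*} {G : SimpleGraph α}
    (hG : ¬ ContainsCopy (cycleGraph 4) G) {a b x y : α}
    (hab : G.Adj a b) (hax : G.Adj a x) (hxy : G.Adj x y) (hyb : G.Adj y b) :
    x = b ∨ y = a := by
  by_contra! h
  exact hG (containsCopy_cycleGraph_four hax hxy hyb hab.symm h.2.symm h.1)

theorem card_filter_fst_eq_add_one_le {ι α β : Type*} [Fintype ι] [Fintype β] [DecidableEq α]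
    {g : ι → α × β} (hg : Function.Injective g) {w : α × β} (hw : ∀ i, g i ≠ w) :
    #{i | (g i).1 = w.1} + 1 ≤ Fintype.card β := by
  classical
  have hsnd : #{i | (g i).1 = w.1} ≤ #(univ.erase w.2) := by
    refine card_le_card_of_injOn (fun i => (g i).2) (fun i hi => ?_) (fun i hi j hj hij => ?_)
    · rw [mem_coe, mem_filter_univ] at hi
      exact mem_erase.2 ⟨fun h => hw i (Prod.ext hi h), mem_univ _⟩
    · rw [mem_coe, mem_filter_univ] at hi hj
      exact hg (Prod.ext (hi.trans hj.symm) hij)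
  have : 0 < Fintype.card β := Fintype.card_pos_iff.2 ⟨w.2⟩
  rw [card_erase_of_mem (mem_univ _), card_univ] at hsnd
  omega

theorem card_le_card_filter_add_card_filter {ι : Type*} [Fintype ι] {p q : ι → Prop}
    [DecidablePred p] [DecidablePred q] (h : ∀ i, p i ∨ q i) :
    Fintype.card ι ≤ #{i | p i} + #{i | q i} := by
  classical
  calc Fintype.card ι = #{i | p i ∨ q i} := by simp [h]
    _ ≤ _ := by rw [filter_or]; exact card_union_le _ _

theorem add_two_le_two_mul_of_containsCopy_Bgraph_blowup {α : Type*} {G : SimpleGraph α}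
    (hG : ¬ ContainsCopy (cycleGraph 4) G) {t s : ℕ}
    (h : ContainsCopy (Bgraph t) (blowup G s)) : t + 2 ≤ 2 * s := by
  classical
  obtain ⟨f, hf, hadj⟩ := h
  have spine : (Bgraph t).Adj (0, .inl 0) (1, .inl 0) := by simp [Bgraph, boxProd_adj]
  have rung (j : Fin t) : (Bgraph t).Adj (0, .inr j) (1, .inr j) := by simp [Bgraph, boxProd_adj]
  have leg (i : Fin 2) (j : Fin t) : (Bgraph t).Adj (i, .inl 0) (i, .inr j) := by
    simp [Bgraph, boxProd_adj]
  have collapse (j : Fin t) : (f (0, .inr j)).1 = (f (1, .inl 0)).1 ∨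
      (f (1, .inr j)).1 = (f (0, .inl 0)).1 :=
    eq_or_eq_of_cycleGraph_four_free hG (hadj spine) (hadj (leg 0 j)) (hadj (rung j))
      (hadj (leg 1 j)).symm
  have rungs_inj (i : Fin 2) : Function.Injective fun j : Fin t => f (i, .inr j) :=
    hf.comp (Function.Injective.comp (Prod.mk_right_injective i) Sum.inr_injective)
  have side0 := card_filter_fst_eq_add_one_le (rungs_inj 0) (w := f (1, .inl 0))
    fun j h => by simpa using hf h
  have side1 := card_filter_fst_eq_add_one_le (rungs_inj 1) (w := f (0, .inl 0))
    fun j h => by simpa using hf h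
  have cover := card_le_card_filter_add_card_filter collapse
  simp only [Fintype.card_fin] at side0 side1 cover
  omega

theorem blowup_Bt_free_general (t : ℕ) {α : Type*} (G₁ : SimpleGraph α)
    (hfree : ¬ ContainsCopy (cycleGraph 4) G₁) :
    ¬ ContainsCopy (Bgraph t) (blowup G₁ ((t + 1) / 2)) := fun h => by
  have := add_two_le_two_mul_of_containsCopy_Bgraph_blowup hfree h
  omega

theorem blowup_Bt_free (t : ℕ) (ht : 1 ≤ t) {α : Type*} (G₁ : SimpleGraph α)
    (hfree : ¬ ContainsCopy (cycleGraph 4) G₁) :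
    ¬ ContainsCopy (Bgraph t) (blowup G₁ ((t + 1) / 2)) :=
  blowup_Bt_free_general t G₁ hfree
end
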